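/- arXiv:1502.07605 — 8 statements merged into one kernel-verified Lean document; each statement's English description precedes it below -/
import Mathlib

section
/- Let n, D ∈ ℕ with D ≥ 1 and k ∈ ℝ. Suppose G is a finite simple graph and T ⊆ V(G) is a set of vertices such that the induced subgraph G' := G \ T (on vertex set V(G) \ T) is triangle-free. If the maximum degree Δ(G) ≤ D, |V(G')| = n, and G' has at least n/2 + k edges, then MIS(G) ≤ 2^{n/2 − k/(100D²) + 101|T|/100}. -/
/-- `I` is an independent set of the simple graph `G`. -/
def IsIndepSet {V : Type*} (G : SimpleGraph V) (I : Set V) : Prop :=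
  ∀ x ∈ I, ∀ y ∈ I, ¬ G.Adj x y

/-- `I` is a maximal independent set of the simple graph `G`. -/
def IsMaxIndepSet {V : Type*} (G : SimpleGraph V) (I : Set V) : Prop :=
  IsIndepSet G I ∧ ∀ J : Set V, IsIndepSet G J → I ⊆ J → I = J

/-- The number of maximal independent sets of `G`. -/
noncomputable def MIS {V : Type*} (G : SimpleGraph V) : ℕ :=
  Set.ncard {I : Set V | IsMaxIndepSet G I}

/-!
Every maximal independent set `I` of `G` is determined by its trace `S = I ∩ T` and by the maximal
independent set `I \ T` of `G'` minus the neighbours of `S`; this costs a factor `2^|T|`.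

For triangle-free `G[A]` we show `MIS(G[A]) ≤ 2^φ(A)`, where `φ(A) = a|A| - b e(A)` with
`b = 1/(100D²)` and `a = (1 + b)/2`, by induction on `|A|`. Take a vertex `v` of minimum positive
degree `d`. If `d = 1`, with neighbour `u`, every maximal independent set contains `v` or `u`.
If `d ≥ 2`, it contains `v` or a first one among the neighbours `w₁, …, w_d` of `v`, which are
pairwise non-adjacent as `G[A]` is triangle-free; a set containing `w_i` and avoiding the `w_j`,
`j < i`, lives in `A` minus those `w_j` and the closed neighbourhood of `w_i`. In each case the
potential drops enough in every branch for the counts to add up to at most `2^φ(A)`.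
Since `a - b/2 = 1/2`, finally `φ(V(G')) ≤ n/2 - bk`.
-/

lemma le_two_rpow_of_pow_le {r x : ℝ} {p q : ℕ} (hr : 0 ≤ r) (hq : 0 < q) (h : r ^ q ≤ 2 ^ p)
    (hx : (p : ℝ) / q ≤ x) : r ≤ 2 ^ x := by
  have hroot : r ≤ ((2 : ℝ) ^ (p : ℝ)) ^ (q : ℝ)⁻¹ :=
    (Real.le_rpow_inv_iff_of_pos hr (by positivity) (by positivity)).2 (by simpa using h)
  rw [← Real.rpow_mul (by norm_num), ← div_eq_mul_inv] at hroot
  exact hroot.trans (Real.rpow_le_rpow_of_exponent_le (by norm_num) hx)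

lemma two_rpow_neg_le_of_pow_le {s x : ℝ} {p q : ℕ} (hs : 0 < s) (hq : 0 < q)
    (h : s⁻¹ ^ q ≤ 2 ^ p) (hx : (p : ℝ) / q ≤ x) : (2 : ℝ) ^ (-x) ≤ s := by
  rw [Real.rpow_neg (by norm_num), inv_le_comm₀ (by positivity) hs]
  exact le_two_rpow_of_pow_le (inv_nonneg.2 hs.le) hq h hx

lemma one_add_geom_sum_le_two_rpow {d : ℕ} (hd : 2 ≤ d) :
    1 + ∑ i ∈ Finset.range d, (3 / 4 : ℝ) ^ i ≤ 2 ^ (((d : ℝ) + 1) / 2 - 1 / 100) := by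
  obtain rfl | rfl | hd4 : d = 2 ∨ d = 3 ∨ 4 ≤ d := by omega
  · refine le_two_rpow_of_pow_le (p := 22) (q := 15) (by positivity) (by norm_num) ?_ ?_ <;>
      norm_num [Finset.sum_range_succ]
  · refine le_two_rpow_of_pow_le (p := 7) (q := 4) (by positivity) (by norm_num) ?_ ?_ <;>
      norm_num [Finset.sum_range_succ]
  · have hgeom : ∑ i ∈ Finset.range d, (3 / 4 : ℝ) ^ i ≤ 4 := by
      have := geom_sum_Ico_le_of_lt_one (m := 0) (n := d) (x := (3 / 4 : ℝ)) (by norm_num)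
        (by norm_num)
      norm_num [Nat.Ico_zero_eq_range] at this
      exact this
    have hd' : (4 : ℝ) ≤ d := by exact_mod_cast hd4
    refine (add_le_add_right hgeom 1).trans
      (le_two_rpow_of_pow_le (p := 7) (q := 3) (by norm_num) (by norm_num) (by norm_num) ?_)
    push_cast
    linarith

lemma two_rpow_neg_add_two_rpow_neg_le_one {x y : ℝ} (hx : 99 / 100 ≤ x) (hy : 149 / 100 ≤ y) :
    (2 : ℝ) ^ (-x) + 2 ^ (-y) ≤ 1 := by
  have h1 : (2 : ℝ) ^ (-x) ≤ 27 / 50 :=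
    two_rpow_neg_le_of_pow_le (p := 9) (q := 10) (by norm_num) (by norm_num) (by norm_num)
      (by push_cast; linarith)
  have h2 : (2 : ℝ) ^ (-y) ≤ 2 / 5 :=
    two_rpow_neg_le_of_pow_le (p := 4) (q := 3) (by norm_num) (by norm_num) (by norm_num)
      (by push_cast; linarith)
  linarith

lemma two_rpow_neg_le_three_quarters {x : ℝ} (hx : 49 / 100 ≤ x) : (2 : ℝ) ^ (-x) ≤ 3 / 4 :=
  two_rpow_neg_le_of_pow_le (p := 7) (q := 15) (by norm_num) (by norm_num) (by norm_num)
    (by push_cast; linarith)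

lemma ncard_le_add_of_subset_union {α : Type*} [Finite α] {s t u : Set α} (h : s ⊆ t ∪ u) :
    s.ncard ≤ t.ncard + u.ncard :=
  (Set.ncard_le_ncard h (Set.toFinite _)).trans (Set.ncard_union_le t u)

namespace SimpleGraph

variable {V : Type*} (G : SimpleGraph V)

/-- The maximal independent sets of `G[A]`, as the independent subsets of `A` dominating `A`. -/
def maxIndepSetsIn (A : Set V) : Set (Set V) :=
  {I | I ⊆ A ∧ G.IsIndepSet I ∧ ∀ x ∈ A, x ∉ I → ∃ y ∈ I, G.Adj x y}

def edgesIn (A : Set V) : Set (Sym2 V) := G.edgeSet ∩ A.sym2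

noncomputable def degIn (A : Set V) (v : V) : ℕ := (G.neighborSet v ∩ A).ncard

noncomputable def edgeWeight (D : ℕ) : ℝ := 1 / (100 * (D : ℝ) ^ 2)

noncomputable def vertexWeight (D : ℕ) : ℝ := 1 / 2 + edgeWeight D / 2

noncomputable def potential (D : ℕ) (A : Set V) : ℝ :=
  vertexWeight D * A.ncard - edgeWeight D * (G.edgesIn A).ncard

variable {G}

lemma isMaxIndepSet_iff_mem_maxIndepSetsIn_univ {I : Set V} :
    IsMaxIndepSet G I ↔ I ∈ G.maxIndepSetsIn Set.univ := by
  have hind : _root_.IsIndepSet G I ↔ G.IsIndepSet I :=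
    ⟨fun h x hx y hy _ => h x hx y hy, fun h x hx y hy hadj => h hx hy (G.ne_of_adj hadj) hadj⟩
  refine ⟨fun ⟨hI, hmax⟩ => ⟨Set.subset_univ I, hind.1 hI, fun x _ hxI => ?_⟩,
    fun ⟨_, hI, hdom⟩ => ⟨hind.2 hI, fun J hJ hIJ => ?_⟩⟩
  · by_contra! hno
    refine hxI (hmax (insert x I) ?_ (Set.subset_insert x I) ▸ Set.mem_insert x I)
    rintro a (rfl | ha) b (rfl | hb) hadj
    exacts [G.loopless.irrefl _ hadj, hno b hb hadj, hno a ha hadj.symm, hI a ha b hb hadj]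
  · refine Set.Subset.antisymm hIJ fun x hxJ => ?_
    by_contra hxI
    obtain ⟨y, hyI, hadj⟩ := hdom x (Set.mem_univ x) hxI
    exact hJ x hxJ y (hIJ hyI) hadj

lemma mem_or_exists_adj_of_mem_maxIndepSetsIn {A I : Set V} (hI : I ∈ G.maxIndepSetsIn A)
    {v : V} (hv : v ∈ A) : v ∈ I ∨ ∃ y ∈ G.neighborSet v ∩ A, y ∈ I := by
  by_cases hvI : v ∈ I
  · exact Or.inl hvI
  · obtain ⟨y, hyI, hadj⟩ := hI.2.2 v hv hvI
    exact Or.inr ⟨y, ⟨hadj, hI.1 hyI⟩, hyI⟩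

lemma mem_maxIndepSetsIn_sdiff_singleton {A I : Set V} (hI : I ∈ G.maxIndepSetsIn A) {w : V}
    (hw : w ∉ I) : I ∈ G.maxIndepSetsIn (A \ {w}) :=
  ⟨fun _ hx => ⟨hI.1 hx, fun h => hw (h ▸ hx)⟩, hI.2.1, fun x hx => hI.2.2 x hx.1⟩

lemma setOf_exists_mem_insert_subset_union [DecidableEq V] {A : Set V} {W : Finset V} {w : V}
    (hwW : w ∉ W) :
    {I ∈ G.maxIndepSetsIn A | ∃ x ∈ insert w W, x ∈ I} ⊆
      {I ∈ G.maxIndepSetsIn A | w ∈ I} ∪ {I ∈ G.maxIndepSetsIn (A \ {w}) | ∃ x ∈ W, x ∈ I} := by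
  rintro I ⟨hI, x, hx, hxI⟩
  by_cases hwI : w ∈ I
  · exact Or.inl ⟨hI, hwI⟩
  · refine Or.inr ⟨mem_maxIndepSetsIn_sdiff_singleton hI hwI, x, ?_, hxI⟩
    rcases Finset.mem_insert.1 hx with rfl | hx
    exacts [absurd hxI hwI, hx]

lemma isIndepSet_neighborSet_inter_of_cliqueFree {B : Set V} (hB : (G.induce B).CliqueFree 3)
    {v : V} (hv : v ∈ B) : G.IsIndepSet (G.neighborSet v ∩ B) := by
  classical
  rintro x ⟨hvx, hx⟩ y ⟨hvy, hy⟩ - hxy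
  exact hB {⟨v, hv⟩, ⟨x, hx⟩, ⟨y, hy⟩}
    (is3Clique_triple_iff.2 ⟨by exact hvx, by exact hvy, by exact hxy⟩)

lemma degIn_sdiff_singleton {A : Set V} {x w : V} (h : ¬G.Adj x w) :
    G.degIn (A \ {w}) x = G.degIn A x := by
  unfold degIn
  congr 1
  ext y
  exact ⟨fun ⟨hxy, hy, _⟩ => ⟨hxy, hy⟩, fun ⟨hxy, hy⟩ => ⟨hxy, hy, fun hyw => h (hyw ▸ hxy)⟩⟩

lemma edgeWeight_nonneg (D : ℕ) : 0 ≤ edgeWeight D := by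
  unfold edgeWeight; positivity

lemma edgeWeight_mul_le {D : ℕ} {x : ℝ} (hx : x ≤ (D : ℝ) ^ 2) : edgeWeight D * x ≤ 1 / 100 := by
  refine (mul_le_mul_of_nonneg_left hx (edgeWeight_nonneg D)).trans ?_
  unfold edgeWeight
  rcases eq_or_ne (D : ℝ) 0 with h | h
  · simp [h]
  · field_simp; rfl

lemma vertexWeight_sub_edgeWeight_mul_ge (D : ℕ) :
    49 / 100 ≤ vertexWeight D - edgeWeight D * D := by
  have := edgeWeight_mul_le (D := D) (x := D) (by exact_mod_cast Nat.le_self_pow two_ne_zero D)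
  have := edgeWeight_nonneg D
  unfold vertexWeight
  linarith

/-- The exponents bound the drops of the potential on deleting `N[v]` and `N[u]`, where `v` has
degree one and its neighbour `u` has degree `du`. -/
lemma two_rpow_neg_pendant_drops_le_one {D du : ℕ} (hdu : 1 ≤ du) (hduD : du ≤ D) :
    (2 : ℝ) ^ (-(2 * vertexWeight D - edgeWeight D * du)) +
      2 ^ (-(vertexWeight D * (du + 1) - edgeWeight D * (1 + (du - 1) * D))) ≤ 1 := by
  have hb := edgeWeight_nonneg D
  obtain rfl | hdu2 := eq_or_lt_of_le hdu
  · rw [show -(2 * vertexWeight D - edgeWeight D * (1 : ℕ)) = -1 by unfold vertexWeight; simp; ring,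
      show -(vertexWeight D * ((1 : ℕ) + 1) - edgeWeight D * (1 + ((1 : ℕ) - 1) * D)) = -1 by
        unfold vertexWeight; simp; ring]
    norm_num
  have h1 : (1 : ℝ) ≤ du := by exact_mod_cast hdu
  have h2 : (2 : ℝ) ≤ du := by exact_mod_cast hdu2
  have hD : (du : ℝ) ≤ D := by exact_mod_cast hduD
  have hbD := edgeWeight_mul_le (D := D) (x := du) (by nlinarith)
  have hbD' := edgeWeight_mul_le (D := D) (x := 1 + (du - 1) * D) (by nlinarith)
  apply two_rpow_neg_add_two_rpow_neg_le_one <;> unfold vertexWeight <;> nlinarith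

lemma potential_le_of_le_ncard_edgesIn {D n : ℕ} {k : ℝ} {A : Set V} (hn : A.ncard = n)
    (hk : (n : ℝ) / 2 + k ≤ (G.edgesIn A).ncard) :
    G.potential D A ≤ n / 2 - k / (100 * (D : ℝ) ^ 2) := by
  have := mul_le_mul_of_nonneg_left hk (edgeWeight_nonneg D)
  have hbk : edgeWeight D * k = k / (100 * (D : ℝ) ^ 2) := by unfold edgeWeight; ring
  unfold potential vertexWeight
  rw [hn]
  linarith

variable [Finite V]

lemma degIn_le {D : ℕ} (hdeg : ∀ v, (G.neighborSet v).ncard ≤ D) (A : Set V) (v : V) :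
    G.degIn A v ≤ D :=
  (Set.ncard_le_ncard Set.inter_subset_left (Set.toFinite _)).trans (hdeg v)

lemma ncard_incident_edgesIn_le (A : Set V) (w : V) :
    {e ∈ G.edgesIn A | w ∈ e}.ncard ≤ G.degIn A w := by
  refine (Set.ncard_le_ncard ?_ (Set.toFinite _)).trans
    (Set.ncard_image_le (f := fun x => s(w, x)) (Set.toFinite (G.neighborSet w ∩ A)))
  rintro e ⟨⟨he, heA⟩, hwe⟩
  obtain ⟨y, rfl⟩ := Sym2.mem_iff_exists.mp hwe
  exact ⟨y, ⟨he, heA.2⟩, rfl⟩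

lemma ncard_edgesIn_le_add_sum {A' A : Set V} (F : Finset V)
    (hcov : ∀ e ∈ G.edgesIn A, e ∉ G.edgesIn A' → ∃ w ∈ F, w ∈ e) :
    (G.edgesIn A).ncard ≤ (G.edgesIn A').ncard + ∑ w ∈ F, G.degIn A w := by
  have hsub : G.edgesIn A ⊆ G.edgesIn A' ∪ ⋃ w ∈ F, {e ∈ G.edgesIn A | w ∈ e} := by
    intro e he
    by_cases he' : e ∈ G.edgesIn A'
    · exact Or.inl he'
    · obtain ⟨w, hw, hwe⟩ := hcov e he he'
      exact Or.inr (Set.mem_biUnion hw ⟨he, hwe⟩)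
  calc (G.edgesIn A).ncard
      ≤ (G.edgesIn A').ncard + (⋃ w ∈ F, {e ∈ G.edgesIn A | w ∈ e}).ncard :=
        ncard_le_add_of_subset_union hsub
    _ ≤ (G.edgesIn A').ncard + ∑ w ∈ F, G.degIn A w := by
        gcongr
        exact (F.set_ncard_biUnion_le _).trans
          (Finset.sum_le_sum fun w _ => ncard_incident_edgesIn_le A w)

lemma ncard_edgeSet_induce (s : Set V) : (G.induce s).edgeSet.ncard = (G.edgesIn s).ncard := by
  classical
  have := Fintype.ofFinite V
  have hcoe : ((G.edgeFinset ∩ s.toFinset.sym2 : Finset (Sym2 V)) : Set (Sym2 V)) =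
      G.edgesIn s := by
    simp [edgesIn, Finset.coe_sym2]
  rw [← hcoe, Set.ncard_coe_finset, ← map_edgeFinset_induce, Finset.card_map,
    Set.ncard_eq_toFinset_card']
  rfl

lemma maxIndepSetsIn_eq_singleton {A : Set V} (hA : ∀ v ∈ A, G.degIn A v = 0) :
    G.maxIndepSetsIn A = {A} := by
  have hind : G.IsIndepSet A := fun x hx y hy _ hadj =>
    ((Set.ncard_pos (Set.toFinite (G.neighborSet x ∩ A))).2 ⟨y, hadj, hy⟩).ne' (hA x hx)
  ext I
  refine ⟨fun hI => Set.Subset.antisymm hI.1 fun x hx => ?_, ?_⟩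
  · by_contra hxI
    obtain ⟨y, hyI, hadj⟩ := hI.2.2 x hx hxI
    exact hind hx (hI.1 hyI) (G.ne_of_adj hadj) hadj
  · rintro rfl
    exact ⟨subset_rfl, hind, fun x hx hxI => absurd hx hxI⟩

lemma ncard_maxIndepSetsIn_mem_le (A : Set V) (w : V) :
    {I ∈ G.maxIndepSetsIn A | w ∈ I}.ncard ≤
      (G.maxIndepSetsIn (A \ insert w (G.neighborSet w))).ncard := by
  refine Set.ncard_le_ncard_of_injOn (fun I => I \ {w}) ?_ ?_ (Set.toFinite _)
  · rintro I ⟨⟨hIA, hind, hdom⟩, hwI⟩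
    refine ⟨?_, hind.mono Set.sdiff_subset, ?_⟩
    · rintro x ⟨hxI, hxw⟩
      refine ⟨hIA hxI, ?_⟩
      rintro (rfl | hadj)
      · exact hxw rfl
      · exact hind hwI hxI (G.ne_of_adj hadj) hadj
    · rintro x ⟨hxA, hxN⟩ hxI
      obtain ⟨y, hyI, hadj⟩ := hdom x hxA fun h => hxI ⟨h, fun hxw => hxN (.inl hxw)⟩
      exact ⟨y, ⟨hyI, fun hyw => hxN (.inr (hyw ▸ hadj.symm))⟩, hadj⟩
  · rintro I ⟨_, hwI⟩ J ⟨_, hwJ⟩ hIJ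
    rw [← Set.insert_sdiff_self_of_mem hwI, ← Set.insert_sdiff_self_of_mem hwJ]
    exact congrArg (insert w) hIJ

lemma ncard_maxIndepSetsIn_le_sum_powerset (A : Set V) (T : Finset V) :
    (G.maxIndepSetsIn A).ncard ≤
      ∑ S ∈ T.powerset, (G.maxIndepSetsIn {x ∈ A \ T | ∀ y ∈ S, ¬G.Adj y x}).ncard := by
  classical
  have hcover : G.maxIndepSetsIn A ⊆
      ⋃ S ∈ T.powerset, {I ∈ G.maxIndepSetsIn A | I ∩ T = S} := fun I hI =>
    Set.mem_biUnion (x := (Set.toFinite (I ∩ T)).toFinset)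
      (Finset.mem_powerset.2 fun x hx => ((Set.Finite.mem_toFinset _).1 hx).2)
      ⟨hI, (Set.Finite.coe_toFinset _).symm⟩
  refine (Set.ncard_le_ncard hcover (Set.toFinite _)).trans
    ((T.powerset.set_ncard_biUnion_le _).trans (Finset.sum_le_sum fun S _ => ?_))
  refine Set.ncard_le_ncard_of_injOn (fun I => I \ T) ?_ ?_ (Set.toFinite _)
  · rintro I ⟨⟨hIA, hind, hdom⟩, hIT⟩
    have hS : ∀ {y}, y ∈ S ↔ y ∈ I ∧ y ∈ T := fun {y} => by
      rw [← Finset.mem_coe, ← hIT]; rfl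
    refine ⟨fun x hx => ⟨⟨hIA hx.1, hx.2⟩, fun y hy hadj => ?_⟩, hind.mono Set.sdiff_subset, ?_⟩
    · exact hind (hS.1 hy).1 hx.1 (fun h => hx.2 (h ▸ (hS.1 hy).2)) hadj
    · rintro x ⟨⟨hxA, hxT⟩, hxS⟩ hxI
      obtain ⟨y, hyI, hadj⟩ := hdom x hxA fun h => hxI ⟨h, hxT⟩
      exact ⟨y, ⟨hyI, fun hyT => hxS y (hS.2 ⟨hyI, hyT⟩) hadj.symm⟩, hadj⟩
  · rintro I ⟨_, hIT⟩ J ⟨_, hJT⟩ hIJ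
    rw [← Set.sdiff_union_inter I T, ← Set.sdiff_union_inter J T, hIT, hJT]
    exact congrArg (· ∪ (S : Set V)) hIJ

lemma potential_le_of_cover {D : ℕ} {A' A : Set V} (h : A' ⊆ A) (F : Finset V)
    (hcov : ∀ e ∈ G.edgesIn A, e ∉ G.edgesIn A' → ∃ w ∈ F, w ∈ e) :
    G.potential D A' ≤ G.potential D A - vertexWeight D * (A \ A').ncard +
      edgeWeight D * ∑ w ∈ F, (G.degIn A w : ℝ) := by
  have hV : (A.ncard : ℝ) = (A \ A').ncard + A'.ncard := by
    exact_mod_cast (Set.ncard_sdiff_add_ncard_of_subset h).symm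
  have hE : ((G.edgesIn A).ncard : ℝ) ≤ (G.edgesIn A').ncard + ∑ w ∈ F, (G.degIn A w : ℝ) := by
    exact_mod_cast ncard_edgesIn_le_add_sum F hcov
  have := mul_le_mul_of_nonneg_left hE (edgeWeight_nonneg D)
  unfold potential
  rw [hV]
  linarith

lemma potential_sdiff_le {D : ℕ} (hdeg : ∀ v, (G.neighborSet v).ncard ≤ D) {A' A : Set V}
    (h : A' ⊆ A) : G.potential D A' ≤ G.potential D A - 49 / 100 * (A \ A').ncard := by
  have hcov : ∀ e ∈ G.edgesIn A, e ∉ G.edgesIn A' →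
      ∃ w ∈ (Set.toFinite (A \ A')).toFinset, w ∈ e := by
    rintro e ⟨he, heA⟩ he'
    induction e using Sym2.ind with
    | _ x y =>
      rw [Set.mk_mem_sym2_iff] at heA
      by_cases hx : x ∈ A'
      · refine ⟨y, by simpa using ⟨heA.2, fun hy => he' ⟨he, hx, hy⟩⟩, Sym2.mem_mk_right x y⟩
      · exact ⟨x, by simpa using ⟨heA.1, hx⟩, Sym2.mem_mk_left x y⟩
  have hsum : ∑ w ∈ (Set.toFinite (A \ A')).toFinset, (G.degIn A w : ℝ) ≤ (A \ A').ncard * D := by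
    rw [Set.ncard_eq_toFinset_card _ (Set.toFinite _), ← nsmul_eq_mul]
    exact Finset.sum_le_card_nsmul _ _ _ fun w _ => by exact_mod_cast degIn_le hdeg A w
  have := potential_le_of_cover (D := D) h _ hcov
  have := mul_le_mul_of_nonneg_left hsum (edgeWeight_nonneg D)
  have := mul_le_mul_of_nonneg_right (vertexWeight_sub_edgeWeight_mul_ge D)
    (Nat.cast_nonneg (α := ℝ) (A \ A').ncard)
  nlinarith

lemma potential_sdiff_closedNbhd_le {D : ℕ} {A : Set V} {w : V} (hw : w ∈ A) :
    G.potential D (A \ insert w (G.neighborSet w)) ≤ G.potential D A -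
      vertexWeight D * (G.degIn A w + 1) +
      edgeWeight D * ∑ x ∈ (Set.toFinite (G.neighborSet w ∩ A)).toFinset, (G.degIn A x : ℝ) := by
  have hcard : (A \ (A \ insert w (G.neighborSet w))).ncard = G.degIn A w + 1 := by
    rw [Set.sdiff_sdiff_right_self, Set.inter_insert_of_mem hw, Set.inter_comm,
      Set.ncard_insert_of_notMem (fun h => G.loopless.irrefl w h.1)]
    rfl
  have hcov : ∀ e ∈ G.edgesIn A, e ∉ G.edgesIn (A \ insert w (G.neighborSet w)) →
      ∃ x ∈ (Set.toFinite (G.neighborSet w ∩ A)).toFinset, x ∈ e := by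
    rintro e ⟨he, heA⟩ he'
    induction e using Sym2.ind with
    | _ x y =>
      rw [Set.mk_mem_sym2_iff] at heA
      have hxy : x ∈ insert w (G.neighborSet w) ∨ y ∈ insert w (G.neighborSet w) := by
        by_contra! hxy
        exact he' ⟨he, ⟨heA.1, hxy.1⟩, heA.2, hxy.2⟩
      simp only [Set.Finite.mem_toFinset]
      rcases hxy with (rfl | hx) | (rfl | hy)
      · exact ⟨y, ⟨he, heA.2⟩, Sym2.mem_mk_right _ _⟩
      · exact ⟨x, ⟨hx, heA.1⟩, Sym2.mem_mk_left _ _⟩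
      · exact ⟨x, ⟨G.adj_symm he, heA.1⟩, Sym2.mem_mk_left _ _⟩
      · exact ⟨y, ⟨hy, heA.2⟩, Sym2.mem_mk_right _ _⟩
  have := potential_le_of_cover (D := D) Set.sdiff_subset _ hcov
  rw [hcard] at this
  push_cast at this
  exact this

lemma sum_degIn_le_degIn_add {D : ℕ} (hdeg : ∀ v, (G.neighborSet v).ncard ≤ D) {A : Set V}
    {u v : V} (hv : v ∈ G.neighborSet u ∩ A) :
    ∑ x ∈ (Set.toFinite (G.neighborSet u ∩ A)).toFinset, (G.degIn A x : ℝ) ≤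
      G.degIn A v + ((G.degIn A u : ℝ) - 1) * D := by
  classical
  have hvF : v ∈ (Set.toFinite (G.neighborSet u ∩ A)).toFinset := by simpa using hv
  have hpos : 1 ≤ G.degIn A u := (Set.ncard_pos (Set.toFinite _)).2 ⟨v, hv⟩
  have hcard : ((Set.toFinite (G.neighborSet u ∩ A)).toFinset.erase v).card = G.degIn A u - 1 := by
    rw [Finset.card_erase_of_mem hvF, ← Set.ncard_eq_toFinset_card]; rfl
  have := Finset.sum_le_card_nsmul ((Set.toFinite (G.neighborSet u ∩ A)).toFinset.erase v)
    (fun x => (G.degIn A x : ℝ)) D fun x _ => by exact_mod_cast degIn_le hdeg A x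
  rw [hcard, nsmul_eq_mul, Nat.cast_sub hpos, Nat.cast_one] at this
  rw [← Finset.add_sum_erase _ _ hvF]
  linarith

variable {D : ℕ} {A : Set V}

lemma potential_sdiff_closedNbhd_le_of_degIn (hdeg : ∀ v, (G.neighborSet v).ncard ≤ D)
    {w : V} (hw : w ∈ A) :
    G.potential D (A \ insert w (G.neighborSet w)) ≤
      G.potential D A - (((G.degIn A w : ℝ) + 1) / 2 - 1 / 100) := by
  have hsum : ∑ x ∈ (Set.toFinite (G.neighborSet w ∩ A)).toFinset, (G.degIn A x : ℝ) ≤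
      G.degIn A w * D := by
    rw [degIn, Set.ncard_eq_toFinset_card _ (Set.toFinite _), ← nsmul_eq_mul]
    exact Finset.sum_le_card_nsmul _ _ _ fun x _ => by exact_mod_cast degIn_le hdeg A x
  have hwD : (G.degIn A w : ℝ) ≤ D := by exact_mod_cast degIn_le hdeg A w
  have := mul_le_mul_of_nonneg_left hsum (edgeWeight_nonneg D)
  have := edgeWeight_mul_le (D := D) (x := G.degIn A w * D) (by nlinarith)
  have := potential_sdiff_closedNbhd_le (G := G) (D := D) hw
  have := edgeWeight_nonneg D
  unfold vertexWeight at *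
  nlinarith

lemma ncard_maxIndepSetsIn_mem_le_of_potential_le
    (ih : ∀ A' ⊂ A, ((G.maxIndepSetsIn A').ncard : ℝ) ≤ 2 ^ G.potential D A')
    {w : V} (hw : w ∈ A) {δ : ℝ}
    (hδ : G.potential D (A \ insert w (G.neighborSet w)) ≤ G.potential D A - δ) :
    ({I ∈ G.maxIndepSetsIn A | w ∈ I}.ncard : ℝ) ≤ 2 ^ G.potential D A * 2 ^ (-δ) := by
  have hsub : A \ insert w (G.neighborSet w) ⊂ A :=
    Set.sdiff_ssubset_left_iff.2 ⟨w, hw, Set.mem_insert w _⟩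
  calc ({I ∈ G.maxIndepSetsIn A | w ∈ I}.ncard : ℝ)
      ≤ (G.maxIndepSetsIn (A \ insert w (G.neighborSet w))).ncard := by
        exact_mod_cast ncard_maxIndepSetsIn_mem_le A w
    _ ≤ 2 ^ G.potential D (A \ insert w (G.neighborSet w)) := ih _ hsub
    _ ≤ 2 ^ (G.potential D A + -δ) := by
        gcongr
        · norm_num
        · linarith
    _ = 2 ^ G.potential D A * 2 ^ (-δ) := Real.rpow_add (by norm_num) _ _

lemma two_rpow_potential_sdiff_singleton_le (hdeg : ∀ v, (G.neighborSet v).ncard ≤ D) {w : V}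
    (hw : w ∈ A) : (2 : ℝ) ^ G.potential D (A \ {w}) ≤ 2 ^ G.potential D A * (3 / 4) := by
  have hdrop : G.potential D (A \ {w}) ≤ G.potential D A + -(49 / 100) := by
    have := potential_sdiff_le hdeg (Set.sdiff_subset : A \ {w} ⊆ A)
    rwa [Set.sdiff_sdiff_right_self, Set.inter_singleton_of_mem hw, Set.ncard_singleton,
      Nat.cast_one, mul_one] at this
  calc (2 : ℝ) ^ G.potential D (A \ {w})
      ≤ 2 ^ (G.potential D A + -(49 / 100)) := Real.rpow_le_rpow_of_exponent_le (by norm_num) hdrop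
    _ = 2 ^ G.potential D A * 2 ^ (-(49 / 100 : ℝ)) := Real.rpow_add (by norm_num) _ _
    _ ≤ 2 ^ G.potential D A * (3 / 4) := by
        gcongr
        exact two_rpow_neg_le_three_quarters le_rfl

/-- Branch on the first vertex of `W` that a maximal independent set contains; as `W` is
independent, deleting the earlier ones does not change the degrees of the later ones. -/
lemma ncard_maxIndepSetsIn_exists_mem_le (hdeg : ∀ v, (G.neighborSet v).ncard ≤ D)
    (W : Finset V) {d : ℕ} :
    ∀ {A : Set V}, (∀ A' ⊂ A, ((G.maxIndepSetsIn A').ncard : ℝ) ≤ 2 ^ G.potential D A') →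
      ↑W ⊆ A → G.IsIndepSet W → (∀ w ∈ W, d ≤ G.degIn A w) →
      ({I ∈ G.maxIndepSetsIn A | ∃ w ∈ W, w ∈ I}.ncard : ℝ) ≤
        2 ^ G.potential D A * 2 ^ (-(((d : ℝ) + 1) / 2 - 1 / 100)) *
          ∑ i ∈ Finset.range W.card, (3 / 4 : ℝ) ^ i := by
  classical
  induction W using Finset.induction_on with
  | empty => intro A _ _ _ _; simp
  | @insert w W hwW IH =>
    intro A ih hWA hind hd
    have hwA : w ∈ A := hWA (by simp)
    set g : ℝ := ((d : ℝ) + 1) / 2 - 1 / 100 with hg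
    have hfirst :
        ({I ∈ G.maxIndepSetsIn A | w ∈ I}.ncard : ℝ) ≤ 2 ^ G.potential D A * 2 ^ (-g) := by
      refine ncard_maxIndepSetsIn_mem_le_of_potential_le ih hwA
        ((potential_sdiff_closedNbhd_le_of_degIn hdeg hwA).trans ?_)
      have : (d : ℝ) ≤ G.degIn A w := by exact_mod_cast hd w (by simp)
      linarith
    have hrest : ({I ∈ G.maxIndepSetsIn (A \ {w}) | ∃ x ∈ W, x ∈ I}.ncard : ℝ) ≤
        2 ^ G.potential D (A \ {w}) * 2 ^ (-g) * ∑ i ∈ Finset.range W.card, (3 / 4 : ℝ) ^ i := by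
      refine IH (fun A' h => ih A' (h.trans_subset Set.sdiff_subset))
        (fun x hx => ⟨hWA (by simp [hx]), fun h => hwW (h ▸ hx)⟩)
        (hind.mono (by simp)) fun x hx => ?_
      rw [degIn_sdiff_singleton (hind (by simp [hx]) (by simp) fun h : x = w => hwW (h ▸ hx))]
      exact hd x (by simp [hx])
    have hS : 0 ≤ ∑ i ∈ Finset.range W.card, (3 / 4 : ℝ) ^ i := by positivity
    have hY : (0 : ℝ) ≤ 2 ^ (-g) := by positivity
    calc ({I ∈ G.maxIndepSetsIn A | ∃ x ∈ insert w W, x ∈ I}.ncard : ℝ)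
        ≤ {I ∈ G.maxIndepSetsIn A | w ∈ I}.ncard +
            {I ∈ G.maxIndepSetsIn (A \ {w}) | ∃ x ∈ W, x ∈ I}.ncard := by
          exact_mod_cast ncard_le_add_of_subset_union (setOf_exists_mem_insert_subset_union hwW)
      _ ≤ 2 ^ G.potential D A * 2 ^ (-g) +
            2 ^ G.potential D A * (3 / 4) * 2 ^ (-g) *
              ∑ i ∈ Finset.range W.card, (3 / 4 : ℝ) ^ i := by
          gcongr
          exact hrest.trans
            (mul_le_mul_of_nonneg_right
              (mul_le_mul_of_nonneg_right (two_rpow_potential_sdiff_singleton_le hdeg hwA) hY) hS)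
      _ = 2 ^ G.potential D A * 2 ^ (-g) *
            ∑ i ∈ Finset.range (insert w W).card, (3 / 4 : ℝ) ^ i := by
          rw [Finset.card_insert_of_notMem hwW, geom_sum_succ]
          ring

lemma ncard_maxIndepSetsIn_le_of_degIn_eq_one (hdeg : ∀ v, (G.neighborSet v).ncard ≤ D)
    (ih : ∀ A' ⊂ A, ((G.maxIndepSetsIn A').ncard : ℝ) ≤ 2 ^ G.potential D A')
    {v : V} (hv : v ∈ A) (hv1 : G.degIn A v = 1) :
    ((G.maxIndepSetsIn A).ncard : ℝ) ≤ 2 ^ G.potential D A := by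
  obtain ⟨u, hNv⟩ := Set.ncard_eq_one.1 hv1
  have hu : u ∈ G.neighborSet v ∩ A := hNv ▸ rfl
  have hvu : v ∈ G.neighborSet u ∩ A := ⟨G.adj_symm hu.1, hv⟩
  set du := G.degIn A u
  have hdu : 1 ≤ du := (Set.ncard_pos (Set.toFinite _)).2 ⟨v, hvu⟩
  have hduD : (du : ℝ) ≤ D := by exact_mod_cast degIn_le hdeg A u
  have hNv' : (Set.toFinite (G.neighborSet v ∩ A)).toFinset = {u} := by
    ext x; simp [hNv]
  have hbranch_v := ncard_maxIndepSetsIn_mem_le_of_potential_le ih hv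
    (δ := 2 * vertexWeight D - edgeWeight D * du) <| by
      have := potential_sdiff_closedNbhd_le (G := G) (D := D) hv
      rw [hNv', Finset.sum_singleton, hv1] at this
      push_cast at this
      linarith
  have hsum := sum_degIn_le_degIn_add hdeg hvu
  rw [hv1, Nat.cast_one] at hsum
  have hbranch_u := ncard_maxIndepSetsIn_mem_le_of_potential_le ih hu.2
    (δ := vertexWeight D * (du + 1) - edgeWeight D * (1 + (du - 1) * D)) <| by
      have := potential_sdiff_closedNbhd_le (G := G) (D := D) hu.2
      have := mul_le_mul_of_nonneg_left hsum (edgeWeight_nonneg D)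
      linarith
  have hcover : G.maxIndepSetsIn A ⊆
      {I ∈ G.maxIndepSetsIn A | v ∈ I} ∪ {I ∈ G.maxIndepSetsIn A | u ∈ I} := by
    intro I hI
    rcases mem_or_exists_adj_of_mem_maxIndepSetsIn hI hv with h | ⟨y, hy, hyI⟩
    · exact Or.inl ⟨hI, h⟩
    · rw [hNv, Set.mem_singleton_iff] at hy
      exact Or.inr ⟨hI, hy ▸ hyI⟩
  calc ((G.maxIndepSetsIn A).ncard : ℝ)
      ≤ {I ∈ G.maxIndepSetsIn A | v ∈ I}.ncard + {I ∈ G.maxIndepSetsIn A | u ∈ I}.ncard := by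
        exact_mod_cast ncard_le_add_of_subset_union hcover
    _ ≤ 2 ^ G.potential D A * (2 ^ (-(2 * vertexWeight D - edgeWeight D * du)) +
          2 ^ (-(vertexWeight D * (du + 1) - edgeWeight D * (1 + (du - 1) * D)))) := by
        rw [mul_add]; exact add_le_add hbranch_v hbranch_u
    _ ≤ 2 ^ G.potential D A := by
        refine mul_le_of_le_one_right (by positivity) ?_
        exact two_rpow_neg_pendant_drops_le_one hdu (by exact_mod_cast hduD)

lemma ncard_maxIndepSetsIn_le_of_minDegree (hdeg : ∀ v, (G.neighborSet v).ncard ≤ D)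
    (ih : ∀ A' ⊂ A, ((G.maxIndepSetsIn A').ncard : ℝ) ≤ 2 ^ G.potential D A')
    {v : V} (hv : v ∈ A) (hv2 : 2 ≤ G.degIn A v)
    (hmin : ∀ u ∈ A, 0 < G.degIn A u → G.degIn A v ≤ G.degIn A u)
    (hN : G.IsIndepSet (G.neighborSet v ∩ A)) :
    ((G.maxIndepSetsIn A).ncard : ℝ) ≤ 2 ^ G.potential D A := by
  set d := G.degIn A v
  set W := (Set.toFinite (G.neighborSet v ∩ A)).toFinset
  set g : ℝ := ((d : ℝ) + 1) / 2 - 1 / 100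
  have hW : (W : Set V) = G.neighborSet v ∩ A := Set.Finite.coe_toFinset _
  have hWcard : W.card = d := (Set.ncard_eq_toFinset_card _ _).symm
  have hbranch_v := ncard_maxIndepSetsIn_mem_le_of_potential_le ih hv
    (potential_sdiff_closedNbhd_le_of_degIn hdeg hv)
  have hbranch_W := ncard_maxIndepSetsIn_exists_mem_le hdeg W ih
    (hW ▸ Set.inter_subset_right) (hW ▸ hN) fun w hw => by
      rw [← Finset.mem_coe, hW] at hw
      exact hmin w hw.2 ((Set.ncard_pos (Set.toFinite _)).2 ⟨v, G.adj_symm hw.1, hv⟩)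
  have hcover : G.maxIndepSetsIn A ⊆
      {I ∈ G.maxIndepSetsIn A | v ∈ I} ∪ {I ∈ G.maxIndepSetsIn A | ∃ w ∈ W, w ∈ I} := by
    intro I hI
    rcases mem_or_exists_adj_of_mem_maxIndepSetsIn hI hv with h | ⟨y, hy, hyI⟩
    · exact Or.inl ⟨hI, h⟩
    · exact Or.inr ⟨hI, y, by rwa [← Finset.mem_coe, hW], hyI⟩
  calc ((G.maxIndepSetsIn A).ncard : ℝ)
      ≤ {I ∈ G.maxIndepSetsIn A | v ∈ I}.ncard +
          {I ∈ G.maxIndepSetsIn A | ∃ w ∈ W, w ∈ I}.ncard := by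
        exact_mod_cast ncard_le_add_of_subset_union hcover
    _ ≤ 2 ^ G.potential D A * 2 ^ (-g) * (1 + ∑ i ∈ Finset.range d, (3 / 4 : ℝ) ^ i) := by
        rw [mul_one_add, ← hWcard]; exact add_le_add hbranch_v hbranch_W
    _ ≤ 2 ^ G.potential D A * 2 ^ (-g) * 2 ^ g := by
        gcongr; exact one_add_geom_sum_le_two_rpow hv2
    _ = 2 ^ G.potential D A := by
        rw [mul_assoc, ← Real.rpow_add (by norm_num), neg_add_cancel, Real.rpow_zero, mul_one]

lemma ncard_maxIndepSetsIn_le_of_degIn_eq_zero (hA : ∀ v ∈ A, G.degIn A v = 0) :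
    ((G.maxIndepSetsIn A).ncard : ℝ) ≤ 2 ^ G.potential D A := by
  have hE : G.edgesIn A = ∅ := by
    refine Set.eq_empty_of_forall_notMem fun e he => ?_
    obtain ⟨he, heA⟩ := he
    induction e using Sym2.ind with
    | _ x y =>
      exact ((Set.ncard_pos (Set.toFinite (G.neighborSet x ∩ A))).2 ⟨y, he, heA.2⟩).ne' (hA x heA.1)
  rw [maxIndepSetsIn_eq_singleton hA, Set.ncard_singleton, Nat.cast_one]
  refine Real.one_le_rpow (by norm_num) ?_
  rw [potential, hE, Set.ncard_empty, Nat.cast_zero, mul_zero, sub_zero]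
  have := edgeWeight_nonneg D
  unfold vertexWeight
  positivity

theorem ncard_maxIndepSetsIn_le_two_rpow_potential (hdeg : ∀ v, (G.neighborSet v).ncard ≤ D)
    {B : Set V} (hB : (G.induce B).CliqueFree 3) (hAB : A ⊆ B) :
    ((G.maxIndepSetsIn A).ncard : ℝ) ≤ 2 ^ G.potential D A := by
  induction hA : A.ncard using Nat.strong_induction_on generalizing A with
  | _ n IH =>
  have ih : ∀ A' ⊂ A, ((G.maxIndepSetsIn A').ncard : ℝ) ≤ 2 ^ G.potential D A' := fun A' h =>
    IH _ (hA ▸ Set.ncard_lt_ncard h) (h.subset.trans hAB) rfl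
  by_cases hE : ∃ v ∈ A, 0 < G.degIn A v
  · obtain ⟨v, ⟨hv, hvpos⟩, hmin⟩ := Set.exists_min_image {v | v ∈ A ∧ 0 < G.degIn A v}
      (G.degIn A) (Set.toFinite _) hE
    by_cases hv1 : G.degIn A v = 1
    · exact ncard_maxIndepSetsIn_le_of_degIn_eq_one hdeg ih hv hv1
    · exact ncard_maxIndepSetsIn_le_of_minDegree hdeg ih hv (by omega)
        (fun u hu hupos => hmin u ⟨hu, hupos⟩)
        ((isIndepSet_neighborSet_inter_of_cliqueFree hB (hAB hv)).mono
          (Set.inter_subset_inter_right _ hAB))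
  · push Not at hE
    exact ncard_maxIndepSetsIn_le_of_degIn_eq_zero fun v hv => Nat.le_zero.1 (hE v hv)

end SimpleGraph

open SimpleGraph in
theorem mis_almost_trianglefree_general {V : Type*} [Fintype V] (n D : ℕ) (k : ℝ)
    (G : SimpleGraph V) (T : Set V)
    (htf : (G.induce Tᶜ).CliqueFree 3)
    (hdeg : ∀ v : V, (G.neighborSet v).ncard ≤ D)
    (hn : Tᶜ.ncard = n)
    (hedge : (n : ℝ) / 2 + k ≤ (((G.induce Tᶜ).edgeSet).ncard : ℝ)) :
    (MIS G : ℝ) ≤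
      (2 : ℝ) ^ ((n : ℝ) / 2 - k / (100 * (D : ℝ) ^ 2) + 101 * (T.ncard : ℝ) / 100) := by
  classical
  have hMIS : MIS G = (G.maxIndepSetsIn Set.univ).ncard :=
    congrArg Set.ncard (Set.ext fun _ => isMaxIndepSet_iff_mem_maxIndepSetsIn_univ)
  have hpart (S : Finset V) :
      ((G.maxIndepSetsIn {x ∈ Set.univ \ ↑T.toFinset | ∀ y ∈ S, ¬G.Adj y x}).ncard : ℝ) ≤
        2 ^ G.potential D Tᶜ := by
    have hsub : {x ∈ Set.univ \ ↑T.toFinset | ∀ y ∈ S, ¬G.Adj y x} ⊆ Tᶜ := fun x hx => by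
      simpa using hx.1.2
    refine (ncard_maxIndepSetsIn_le_two_rpow_potential hdeg htf hsub).trans
      (Real.rpow_le_rpow_of_exponent_le (by norm_num) ?_)
    exact (potential_sdiff_le hdeg hsub).trans (sub_le_self _ (by positivity))
  have hφ : G.potential D Tᶜ ≤ n / 2 - k / (100 * (D : ℝ) ^ 2) :=
    potential_le_of_le_ncard_edgesIn hn (by rwa [← ncard_edgeSet_induce])
  calc (MIS G : ℝ)
      ≤ ∑ S ∈ T.toFinset.powerset,
          ((G.maxIndepSetsIn {x ∈ Set.univ \ ↑T.toFinset | ∀ y ∈ S, ¬G.Adj y x}).ncard : ℝ) := by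
        rw [hMIS]; exact_mod_cast ncard_maxIndepSetsIn_le_sum_powerset _ _
    _ ≤ ∑ S ∈ T.toFinset.powerset, (2 : ℝ) ^ G.potential D Tᶜ :=
        Finset.sum_le_sum fun S _ => hpart S
    _ = 2 ^ ((T.ncard : ℝ) + G.potential D Tᶜ) := by
        rw [Finset.sum_const, Finset.card_powerset, nsmul_eq_mul, Real.rpow_add (by norm_num),
          Set.ncard_eq_toFinset_card']
        norm_cast
    _ ≤ 2 ^ ((n : ℝ) / 2 - k / (100 * (D : ℝ) ^ 2) + 101 * (T.ncard : ℝ) / 100) :=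
        Real.rpow_le_rpow_of_exponent_le (by norm_num)
          (by linarith [Nat.cast_nonneg (α := ℝ) T.ncard])

/-- If `G \ T` is triangle-free on `n` vertices with at least `n/2 + k` edges and
`Δ(G) ≤ D`, then `MIS(G) ≤ 2^{n/2 - k/(100 D²) + 101|T|/100}`. -/
theorem mis_almost_trianglefree {V : Type*} [Fintype V] (n D : ℕ) (hD : 1 ≤ D) (k : ℝ)
    (G : SimpleGraph V) (T : Set V)
    (htf : (G.induce Tᶜ).CliqueFree 3)
    (hdeg : ∀ v : V, (G.neighborSet v).ncard ≤ D)
    (hn : Tᶜ.ncard = n)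
    (hedge : (n : ℝ) / 2 + k ≤ (((G.induce Tᶜ).edgeSet).ncard : ℝ)) :
    (MIS G : ℝ) ≤
      (2 : ℝ) ^ ((n : ℝ) / 2 - k / (100 * (D : ℝ) ^ 2) + 101 * (T.ncard : ℝ) / 100) :=
  mis_almost_trianglefree_general n D k G T htf hdeg hn hedge
end

section
/- Suppose B, S ⊆ [n] are such that S is sum-free and max(S) < min(B). Then the link graph L_S[B] is triangle-free, i.e. it contains no three distinct pairwise adjacent vertices. -/
/-- A set of naturals is sum-free if it contains no Schur triple `x + y = z`. -/
def SumFree (S : Finset ℕ) : Prop := ∀ x ∈ S, ∀ y ∈ S, x + y ∉ S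

/-- `(x, y, z)` is a Schur triple (as an unordered statement about `{x, y, z}`). -/
def SchurTriple (x y z : ℕ) : Prop := x + y = z ∨ x + z = y ∨ y + z = x

/-- Distinct `x` and `y` are adjacent in the link graph of `S`. -/
def LinkAdj (S : Finset ℕ) (x y : ℕ) : Prop := x ≠ y ∧ ∃ z ∈ S, SchurTriple x y z

/-- If `S` is sum-free and every element of `S` is smaller than every element of `B`,
then the link graph `L_S[B]` is triangle-free: it contains no three distinct pairwise
adjacent vertices. -/
theorem link_graph_triangle_free (n : ℕ) (S B : Finset ℕ)
    (hS : S ⊆ Finset.Icc 1 n) (hB : B ⊆ Finset.Icc 1 n)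
    (hSF : SumFree S) (hlt : ∀ s ∈ S, ∀ b ∈ B, s < b) :
    ¬ ∃ x ∈ B, ∃ y ∈ B, ∃ z ∈ B, x ≠ y ∧ x ≠ z ∧ y ≠ z ∧
        LinkAdj S x y ∧ LinkAdj S x z ∧ LinkAdj S y z := by
  have key : ∀ a ∈ B, ∀ b ∈ B, a < b → LinkAdj S a b → b - a ∈ S := by
    intro a ha b hb hab ⟨hne, s, hs, hschur⟩
    have h1 := hlt s hs a ha
    have h2 := hlt s hs b hb
    rcases hschur with h | h | h
    · omega
    · have : b - a = s := by omega
      rwa [this]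
    · omega
  have tri : ∀ a ∈ B, ∀ b ∈ B, ∀ c ∈ B, a < b → b < c →
      LinkAdj S a b → LinkAdj S b c → LinkAdj S a c → False := by
    intro a ha b hb c hc hab hbc Aab Abc Aac
    have m1 := key a ha b hb hab Aab
    have m2 := key b hb c hc hbc Abc
    have m3 := key a ha c hc (hab.trans hbc) Aac
    have : b - a + (c - b) = c - a := by omega
    exact hSF _ m1 _ m2 (this ▸ m3)
  rintro ⟨x, hx, y, hy, z, hz, hxy, hxz, hyz, A1, A2, A3⟩
  have sym : ∀ a b, LinkAdj S a b → LinkAdj S b a := by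
    rintro a b ⟨hne, s, hs, h⟩
    exact ⟨hne.symm, s, hs, by unfold SchurTriple at h ⊢; omega⟩
  rcases lt_trichotomy x y with h1 | h1 | h1 <;> rcases lt_trichotomy y z with h2 | h2 | h2 <;>
    rcases lt_trichotomy x z with h3 | h3 | h3 <;> first
      | omega
      | exact tri x hx y hy z hz h1 h2 A1 A3 A2
      | exact tri x hx z hz y hy h3 h2 A2 (sym _ _ A3) A1
      | exact tri y hy x hx z hz h1 h3 (sym _ _ A1) A2 A3
      | exact tri y hy z hz x hx h2 h3 A3 (sym _ _ A2) (sym _ _ A1)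
      | exact tri z hz x hx y hy h3 h1 (sym _ _ A2) A1 (sym _ _ A3)
      | exact tri z hz y hy x hx h2 h1 (sym _ _ A3) (sym _ _ A1) (sym _ _ A2)
end

section
/- There exist β > 0 and n_0 ∈ ℕ such that for all n ≥ n_0: if F ⊆ [n] contains at most βn² Schur triples (triples (x,y,z) ∈ F×F×F with x+y=z) and |F| ≤ 0.47n, then the number of maximal sum-free subsets of [n] contained in F is at most 2^{0.249n}. -/
/-- `M` is a maximal sum-free subset of `[n] = {1, …, n}`. -/
def MaxSF (n : ℕ) (M : Finset ℕ) : Prop :=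
  M ⊆ Finset.Icc 1 n ∧ SumFree M ∧
    ∀ M' : Finset ℕ, M' ⊆ Finset.Icc 1 n → SumFree M' → M ⊆ M' → M = M'

/-- The number of maximal sum-free subsets of `[n]` contained in `F`. -/
noncomputable def fmaxIn (n : ℕ) (F : Finset ℕ) : ℕ :=
  Set.ncard {M : Finset ℕ | MaxSF n M ∧ M ⊆ F}

/-!
Arithmetic triangle removal, applied to the Cayley graph of `ZMod (3n+1)` with connection set
`±F`, splits a set `F` with few Schur triples as `F = B ∪ C` with `B` sum-free and `|C| ≤ εn`.
A maximal sum-free `M ⊆ B ∪ C` is determined by `I = M ∩ C` and `M ∩ B`, and the latter is a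
maximal independent set of the link graph of `I` (join `b, b'` when `I ∪ {b, b'}` is not sum-free)
on `B`: a Schur triple meets the sum-free `B` in at most two elements. By Moon–Moser there are at
most `3^{|B|/3}` such sets, so there are at most `2^{|C|} 3^{|B|/3} ≤ 2^{(log₂ 3 / 3) 0.47 n + o(n)}`
maximal sum-free sets in `F`, and `(log₂ 3 / 3) · 0.47 < 0.249`.
-/

open Finset

lemma Nat.pow_three_le_three_pow (k : ℕ) : k ^ 3 ≤ 3 ^ k := by
  induction k with
  | zero => decide
  | succ k ih =>
    rcases Nat.lt_or_ge k 3 with hk | hk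
    · interval_cases k <;> decide
    · calc (k + 1) ^ 3 ≤ 3 * k ^ 3 := by nlinarith [Nat.mul_le_mul_left (k ^ 2) hk]
        _ ≤ 3 * 3 ^ k := Nat.mul_le_mul_left 3 ih
        _ = 3 ^ (k + 1) := (Nat.pow_succ' ..).symm

lemma Finset.sum_pow_le_card_pow_mul {ι : Type*} {s : Finset ι} (hs : s.Nonempty) {f : ι → ℕ}
    {k X : ℕ} (hf : ∀ i ∈ s, f i ^ k ≤ X) : (∑ i ∈ s, f i) ^ k ≤ #s ^ k * X := by
  obtain ⟨j, hj, hjmax⟩ := s.exists_max_image f hs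
  calc (∑ i ∈ s, f i) ^ k ≤ (#s * f j) ^ k := by
        gcongr
        simpa using Finset.sum_le_card_nsmul s f (f j) hjmax
    _ ≤ #s ^ k * X := by rw [mul_pow]; exact Nat.mul_le_mul_left _ (hf j hj)

namespace SimpleGraph

variable {α : Type*} [DecidableEq α] (G : SimpleGraph α)

open Classical in
/-- The maximal independent sets of `G` inside `V`, characterised as the independent subsets of
`V` dominating `V`. -/
noncomputable def maximalIndepSets (V : Finset α) : Finset (Finset α) :=
  {J ∈ V.powerset | G.IsIndepSet J ∧ ∀ b ∈ V, b ∉ J → ∃ a ∈ J, G.Adj a b}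

open Classical in
noncomputable def closedNbhdWithin (V : Finset α) (u : α) : Finset α := insert u {w ∈ V | G.Adj u w}

variable {G}

lemma mem_maximalIndepSets {V J : Finset α} :
    J ∈ G.maximalIndepSets V ↔
      J ⊆ V ∧ G.IsIndepSet J ∧ ∀ b ∈ V, b ∉ J → ∃ a ∈ J, G.Adj a b := by
  simp [maximalIndepSets]

open Classical in
lemma mem_closedNbhdWithin {V : Finset α} {u w : α} :
    w ∈ G.closedNbhdWithin V u ↔ w = u ∨ w ∈ V ∧ G.Adj u w := by
  simp [closedNbhdWithin]

lemma closedNbhdWithin_subset {V : Finset α} {u : α} (hu : u ∈ V) :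
    G.closedNbhdWithin V u ⊆ V := fun _ hw => by
  rcases mem_closedNbhdWithin.1 hw with rfl | ⟨hw, -⟩ <;> assumption

lemma maximalIndepSets_empty : G.maximalIndepSets ∅ = {∅} := by
  ext J
  rw [mem_maximalIndepSets, mem_singleton, subset_empty]
  exact ⟨fun h => h.1, by rintro rfl; simp⟩

lemma exists_mem_closedNbhdWithin_of_mem_maximalIndepSets {V J : Finset α} {v : α}
    (hJ : J ∈ G.maximalIndepSets V) (hv : v ∈ V) : ∃ u ∈ G.closedNbhdWithin V v, u ∈ J := by
  obtain ⟨hJV, -, hdom⟩ := mem_maximalIndepSets.1 hJ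
  by_cases hvJ : v ∈ J
  · exact ⟨v, mem_closedNbhdWithin.2 (.inl rfl), hvJ⟩
  · obtain ⟨a, haJ, hav⟩ := hdom v hv hvJ
    exact ⟨a, mem_closedNbhdWithin.2 (.inr ⟨hJV haJ, hav.symm⟩), haJ⟩

lemma erase_mem_maximalIndepSets_sdiff {V J : Finset α} {u : α}
    (hJ : J ∈ G.maximalIndepSets V) (hu : u ∈ J) :
    J.erase u ∈ G.maximalIndepSets (V \ G.closedNbhdWithin V u) := by
  obtain ⟨hJV, hind, hdom⟩ := mem_maximalIndepSets.1 hJ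
  refine mem_maximalIndepSets.2 ⟨fun x hx => ?_, hind.mono (by simp), fun b hb hbJ => ?_⟩
  · obtain ⟨hxu, hxJ⟩ := mem_erase.1 hx
    refine mem_sdiff.2 ⟨hJV hxJ, fun hxN => ?_⟩
    rcases mem_closedNbhdWithin.1 hxN with rfl | ⟨-, hux⟩
    · exact hxu rfl
    · exact hind hu hxJ (Ne.symm hxu) hux
  · obtain ⟨hbV, hbN⟩ := mem_sdiff.1 hb
    have hbu : b ≠ u := fun h => hbN (mem_closedNbhdWithin.2 (.inl h))
    obtain ⟨a, haJ, hab⟩ := hdom b hbV fun h => hbJ (mem_erase.2 ⟨hbu, h⟩)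
    have hau : a ≠ u := by
      rintro rfl
      exact hbN (mem_closedNbhdWithin.2 (.inr ⟨hbV, hab⟩))
    exact ⟨a, mem_erase.2 ⟨hau, haJ⟩, hab⟩

lemma card_maximalIndepSets_le_sum {V : Finset α} {v : α} (hv : v ∈ V) :
    #(G.maximalIndepSets V) ≤
      ∑ u ∈ G.closedNbhdWithin V v, #(G.maximalIndepSets (V \ G.closedNbhdWithin V u)) := by
  have hcover : G.maximalIndepSets V ⊆ (G.closedNbhdWithin V v).biUnion
      fun u => (G.maximalIndepSets (V \ G.closedNbhdWithin V u)).image (insert u) := by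
    intro J hJ
    obtain ⟨u, huN, huJ⟩ := exists_mem_closedNbhdWithin_of_mem_maximalIndepSets hJ hv
    exact mem_biUnion.2 ⟨u, huN, mem_image.2
      ⟨J.erase u, erase_mem_maximalIndepSets_sdiff hJ huJ, insert_erase huJ⟩⟩
  calc #(G.maximalIndepSets V) ≤ _ := card_le_card hcover
    _ ≤ _ := card_biUnion_le
    _ ≤ _ := sum_le_sum fun u _ => card_image_le

/-- Moon–Moser. Branching on the closed neighbourhood, of size `k`, of a vertex of minimum degree
gives at most `k` subproblems on at most `|V| - k` vertices each, and `k ^ 3 ≤ 3 ^ k`. -/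
theorem card_maximalIndepSets_pow_three_le (V : Finset α) :
    #(G.maximalIndepSets V) ^ 3 ≤ 3 ^ #V := by
  induction V using Finset.strongInduction with
  | _ V ih =>
  rcases V.eq_empty_or_nonempty with rfl | hne
  · simp [maximalIndepSets_empty]
  obtain ⟨v, hv, hvmin⟩ := V.exists_min_image (fun u => #(G.closedNbhdWithin V u)) hne
  set k := #(G.closedNbhdWithin V v)
  have hkV : k ≤ #V := card_le_card (closedNbhdWithin_subset hv)
  have hsub : ∀ u ∈ G.closedNbhdWithin V v,
      #(G.maximalIndepSets (V \ G.closedNbhdWithin V u)) ^ 3 ≤ 3 ^ (#V - k) := by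
    intro u hu
    have huV := closedNbhdWithin_subset hv hu
    have hssub : V \ G.closedNbhdWithin V u ⊂ V :=
      sdiff_ssubset (closedNbhdWithin_subset huV) ⟨u, mem_insert_self _ _⟩
    refine (ih _ hssub).trans (Nat.pow_le_pow_right (by norm_num) ?_)
    rw [card_sdiff_of_subset (closedNbhdWithin_subset huV)]
    exact Nat.sub_le_sub_left (hvmin u huV) _
  calc #(G.maximalIndepSets V) ^ 3
      ≤ (∑ u ∈ G.closedNbhdWithin V v, #(G.maximalIndepSets (V \ G.closedNbhdWithin V u))) ^ 3 :=
        Nat.pow_le_pow_left (card_maximalIndepSets_le_sum hv) 3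
    _ ≤ k ^ 3 * 3 ^ (#V - k) := sum_pow_le_card_pow_mul ⟨v, mem_insert_self _ _⟩ hsub
    _ ≤ 3 ^ k * 3 ^ (#V - k) := Nat.mul_le_mul_right _ (Nat.pow_three_le_three_pow k)
    _ = 3 ^ #V := by rw [← pow_add, Nat.add_sub_cancel' hkV]

end SimpleGraph

lemma SumFree.mono {S T : Finset ℕ} (h : SumFree S) (hTS : T ⊆ S) : SumFree T :=
  fun x hx y hy hz => h x (hTS hx) y (hTS hy) (hTS hz)

/-- A Schur triple in `K ∪ I` with `K` inside a sum-free set uses at most two elements of `K`. -/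
lemma sumFree_union_of_forall_pair {B K I : Finset ℕ} (hB : SumFree B) (hKB : K ⊆ B)
    (hK : K.Nonempty) (hpair : ∀ p ∈ K, ∀ q ∈ K, SumFree (insert p (insert q I))) :
    SumFree (K ∪ I) := by
  obtain ⟨k, hk⟩ := hK
  have hcover : ∀ e₁ ∈ K ∪ I, ∀ e₂ ∈ K ∪ I, ∃ p ∈ K, ∃ q ∈ K,
      e₁ ∈ insert p (insert q I) ∧ e₂ ∈ insert p (insert q I) ∧ I ⊆ insert p (insert q I) := by
    intro e₁ h₁ e₂ h₂
    have hI : ∀ p q : ℕ, I ⊆ insert p (insert q I) := fun p q =>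
      (subset_insert q I).trans (subset_insert p _)
    rcases mem_union.1 h₁ with h₁ | h₁ <;> rcases mem_union.1 h₂ with h₂ | h₂
    · exact ⟨e₁, h₁, e₂, h₂, mem_insert_self _ _, mem_insert_of_mem (mem_insert_self _ _), hI _ _⟩
    · exact ⟨e₁, h₁, k, hk, mem_insert_self _ _, hI _ _ h₂, hI _ _⟩
    · exact ⟨k, hk, e₂, h₂, hI _ _ h₁, mem_insert_of_mem (mem_insert_self _ _), hI _ _⟩
    · exact ⟨k, hk, k, hk, hI _ _ h₁, hI _ _ h₂, hI _ _⟩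
  intro x hx y hy hxy
  rcases mem_union.1 hx with hxK | hxI
  · rcases mem_union.1 hy with hyK | hyI
    · rcases mem_union.1 hxy with hxyK | hxyI
      · exact hB x (hKB hxK) y (hKB hyK) (hKB hxyK)
      · obtain ⟨p, hp, q, hq, h₁, h₂, hI⟩ := hcover x hx y hy
        exact hpair p hp q hq x h₁ y h₂ (hI hxyI)
    · obtain ⟨p, hp, q, hq, h₁, h₂, hI⟩ := hcover x hx (x + y) hxy
      exact hpair p hp q hq x h₁ y (hI hyI) h₂
  · obtain ⟨p, hp, q, hq, h₁, h₂, hI⟩ := hcover y hy (x + y) hxy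
    exact hpair p hp q hq x (hI hxI) y h₁ h₂

def linkGraph (I : Finset ℕ) : SimpleGraph ℕ :=
  SimpleGraph.fromRel fun x y => ¬ SumFree (insert x (insert y I))

lemma sumFree_insert_insert_of_not_linkGraph_adj {I : Finset ℕ} {p q : ℕ}
    (hp : SumFree (insert p I)) (hpq : ¬ (linkGraph I).Adj p q) :
    SumFree (insert p (insert q I)) := by
  rcases eq_or_ne p q with rfl | hne
  · rwa [insert_idem]
  · simp only [linkGraph, SimpleGraph.fromRel_adj, not_and, not_or, not_not] at hpq
    exact (hpq hne).1

open Classical in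
noncomputable def extendable (B I : Finset ℕ) : Finset ℕ := {b ∈ B | SumFree (insert b I)}

open Classical in
lemma mem_extendable {B I : Finset ℕ} {b : ℕ} :
    b ∈ extendable B I ↔ b ∈ B ∧ SumFree (insert b I) := by
  simp [extendable]

lemma extendable_subset (B I : Finset ℕ) : extendable B I ⊆ B := fun _ hb =>
  (mem_extendable.1 hb).1

lemma sumFree_insert_union_of_forall_not_adj {B I J : Finset ℕ} {b : ℕ} (hB : SumFree B)
    (hJB : J ⊆ B) (hbB : b ∈ B) (hJI : SumFree (J ∪ I)) (hbI : SumFree (insert b I))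
    (hbJ : ∀ a ∈ J, ¬ (linkGraph I).Adj b a) : SumFree (insert b (J ∪ I)) := by
  have hJ : ∀ p ∈ J, ∀ q ∈ J, SumFree (insert p (insert q I)) := fun p hp q hq =>
    hJI.mono (insert_subset (mem_union_left _ hp)
      (insert_subset (mem_union_left _ hq) subset_union_right))
  rw [← insert_union]
  refine sumFree_union_of_forall_pair hB (insert_subset hbB hJB) (insert_nonempty _ _) ?_
  intro p hp q hq
  rcases mem_insert.1 hp with rfl | hpJ <;> rcases mem_insert.1 hq with rfl | hqJ
  · rwa [insert_idem]
  · exact sumFree_insert_insert_of_not_linkGraph_adj hbI (hbJ q hqJ)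
  · rw [insert_comm]
    exact sumFree_insert_insert_of_not_linkGraph_adj hbI (hbJ p hpJ)
  · exact hJ p hpJ q hqJ

lemma inter_mem_maximalIndepSets_of_maxSF {n : ℕ} {B C M : Finset ℕ} (hB : SumFree B)
    (hBn : B ⊆ Finset.Icc 1 n) (hM : MaxSF n M) (hMBC : M ⊆ B ∪ C) :
    M ∩ B ∈ (linkGraph (M ∩ C)).maximalIndepSets (extendable B (M ∩ C)) := by
  obtain ⟨hMn, hMsf, hMmax⟩ := hM
  have hunion : M ∩ B ∪ M ∩ C = M := by
    rw [← inter_union_distrib_left, inter_eq_left.2 hMBC]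
  have hsub : ∀ p ∈ M ∩ B, ∀ q ∈ M ∩ B, SumFree (insert p (insert q (M ∩ C))) := fun p hp q hq =>
    hMsf.mono (insert_subset (mem_of_mem_inter_left hp)
      (insert_subset (mem_of_mem_inter_left hq) inter_subset_left))
  refine SimpleGraph.mem_maximalIndepSets.2 ⟨fun b hb => ?_, fun p hp q hq _ hadj => ?_, ?_⟩
  · exact mem_extendable.2 ⟨mem_of_mem_inter_right hb, by simpa using hsub b hb b hb⟩
  · simp only [linkGraph, SimpleGraph.fromRel_adj] at hadj
    rcases hadj.2 with h | h
    · exact h (hsub p hp q hq)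
    · exact h (hsub q hq p hp)
  · intro b hb hbJ
    by_contra! hnadj
    obtain ⟨hbB, hbI⟩ := mem_extendable.1 hb
    have hsf : SumFree (insert b M) := by
      rw [← hunion]
      exact sumFree_insert_union_of_forall_not_adj hB inter_subset_right hbB
        (by rwa [hunion]) hbI fun a ha => hnadj a ha ∘ SimpleGraph.Adj.symm
    have hbM : b ∈ M := by
      rw [hMmax _ (insert_subset (hBn hbB) hMn) hsf (subset_insert _ _)]
      exact mem_insert_self _ _
    exact hbJ (mem_inter.2 ⟨hbM, hbB⟩)

theorem fmaxIn_union_pow_three_le {n : ℕ} {B C : Finset ℕ} (hB : SumFree B)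
    (hBn : B ⊆ Finset.Icc 1 n) :
    fmaxIn n (B ∪ C) ^ 3 ≤ 2 ^ (3 * #C) * 3 ^ #B := by
  set MIS := fun I => (linkGraph I).maximalIndepSets (extendable B I)
  have hcover : {M | MaxSF n M ∧ M ⊆ B ∪ C} ⊆
      ↑(C.powerset.biUnion fun I => (MIS I).image (· ∪ I)) := by
    rintro M ⟨hM, hMBC⟩
    refine mem_biUnion.2 ⟨M ∩ C, mem_powerset.2 inter_subset_right, mem_image.2
      ⟨M ∩ B, inter_mem_maximalIndepSets_of_maxSF hB hBn hM hMBC, ?_⟩⟩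
    rw [← inter_union_distrib_left, inter_eq_left.2 hMBC]
  have hMIS : ∀ I ∈ C.powerset, #(MIS I) ^ 3 ≤ 3 ^ #B := fun I _ =>
    (SimpleGraph.card_maximalIndepSets_pow_three_le _).trans
      (Nat.pow_le_pow_right (by norm_num) (card_le_card (extendable_subset B I)))
  calc fmaxIn n (B ∪ C) ^ 3 ≤ (∑ I ∈ C.powerset, #(MIS I)) ^ 3 := by
        refine Nat.pow_le_pow_left ?_ 3
        refine (Set.ncard_le_ncard hcover (Finset.finite_toSet _)).trans ?_
        rw [Set.ncard_coe_finset]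
        exact card_biUnion_le.trans (sum_le_sum fun I _ => card_image_le)
    _ ≤ #C.powerset ^ 3 * 3 ^ #B := sum_pow_le_card_pow_mul ⟨∅, empty_mem_powerset C⟩ hMIS
    _ = 2 ^ (3 * #C) * 3 ^ #B := by rw [card_powerset, ← pow_mul, mul_comm #C]

lemma ZMod.natCast_ne_zero_of_lt {N a : ℕ} (ha : 0 < a) (haN : a < N) : (a : ZMod N) ≠ 0 := by
  rw [Ne, ZMod.natCast_eq_zero_iff]
  exact Nat.not_dvd_of_pos_of_lt ha haN

lemma ZMod.natCast_eq_natCast_iff_of_lt {N a b : ℕ} (ha : a < N) (hb : b < N) :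
    (a : ZMod N) = b ↔ a = b := by
  rw [ZMod.natCast_eq_natCast_iff', Nat.mod_eq_of_lt ha, Nat.mod_eq_of_lt hb]

lemma SimpleGraph.CliqueFree.card_le_card_not_adj_add {α : Type*} [AddCommGroup α] [Fintype α]
    [DecidableEq α] {H : SimpleGraph α} [DecidableRel H.Adj] (hH : H.CliqueFree 3) (a b : α) :
    Fintype.card α ≤
      #{u | ¬H.Adj u (u + a)} + #{u | ¬H.Adj u (u + b)} + #{u | ¬H.Adj u (u + (a + b))} := by
  have hcover : (univ : Finset α) ⊆
      ({u | ¬H.Adj u (u + a)} : Finset α) ∪ ({u | ¬H.Adj (u + a) (u + (a + b))} : Finset α) ∪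
        ({u | ¬H.Adj u (u + (a + b))} : Finset α) := by
    intro u _
    by_contra h
    simp only [mem_union, mem_filter, mem_univ, true_and, not_or, not_not] at h
    exact hH _ (SimpleGraph.is3Clique_triple_iff.2 ⟨h.1.1, h.2, h.1.2⟩)
  have hshift : #{u | ¬H.Adj (u + a) (u + (a + b))} ≤ #{u | ¬H.Adj u (u + b)} :=
    card_le_card_of_injOn (· + a) (fun u hu => by simpa [add_assoc] using hu)
      (fun _ _ _ _ => add_right_cancel)
  calc Fintype.card α = #(univ : Finset α) := card_univ.symm
    _ ≤ _ := card_le_card hcover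
    _ ≤ _ := (card_union_le _ _).trans (Nat.add_le_add_right (card_union_le _ _) _)
    _ ≤ _ := by omega

def schurTriples (F : Finset ℕ) : Finset ((ℕ × ℕ) × ℕ) :=
  {p ∈ (F ×ˢ F) ×ˢ F | p.1.1 + p.1.2 = p.2}

def schurGraph (N : ℕ) (F : Finset ℕ) : SimpleGraph (ZMod N) :=
  SimpleGraph.fromRel fun x y => ∃ a ∈ F, y = x + a

/-- The triangle `{u, u + x, u + z}` of `schurGraph` spanned by a Schur triple `x + y = z`. -/
def schurTriangle {N : ℕ} (q : ((ℕ × ℕ) × ℕ) × ZMod N) : Finset (ZMod N) :=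
  {q.2, q.2 + q.1.1.1, q.2 + q.1.2}

section SchurGraph

variable {N n : ℕ} {F : Finset ℕ}

lemma schurGraph_adj_add {a : ℕ} (ha : a ∈ F) (ha0 : (a : ZMod N) ≠ 0) (u : ZMod N) :
    (schurGraph N F).Adj u (u + a) := by
  rw [schurGraph, SimpleGraph.fromRel_adj]
  exact ⟨fun h => ha0 (left_eq_add.1 h), .inl ⟨a, ha, rfl⟩⟩

/-- Since `3n < N`, three elements of `[n]` cannot sum to `0` in `ZMod N`. -/
lemma not_cyclic_of_three_mul_lt (hF : F ⊆ Icc 1 n) (hN : 3 * n < N) {x y z : ZMod N}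
    (hxy : ∃ a ∈ F, y = x + a) (hyz : ∃ b ∈ F, z = y + b) (hzx : ∃ c ∈ F, x = z + c) : False := by
  obtain ⟨a, ha, rfl⟩ := hxy
  obtain ⟨b, hb, rfl⟩ := hyz
  obtain ⟨c, hc, hx⟩ := hzx
  have ha' := mem_Icc.1 (hF ha); have hb' := mem_Icc.1 (hF hb); have hc' := mem_Icc.1 (hF hc)
  refine ZMod.natCast_ne_zero_of_lt (N := N) (a := a + b + c) (by omega) (by omega) ?_
  push_cast
  linear_combination -hx

lemma schurTriangle_mem_image [NeZero N] (hF : F ⊆ Icc 1 n) (hN : 2 * n < N) {x y z : ZMod N}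
    (hxy : ∃ a ∈ F, y = x + a) (hyz : ∃ b ∈ F, z = y + b) (hxz : ∃ c ∈ F, z = x + c) :
    ({x, y, z} : Finset (ZMod N)) ∈ (schurTriples F ×ˢ univ).image schurTriangle := by
  obtain ⟨a, ha, rfl⟩ := hxy
  obtain ⟨b, hb, rfl⟩ := hyz
  obtain ⟨c, hc, hz⟩ := hxz
  have ha' := mem_Icc.1 (hF ha); have hb' := mem_Icc.1 (hF hb); have hc' := mem_Icc.1 (hF hc)
  have habc : a + b = c := by
    rw [← ZMod.natCast_eq_natCast_iff_of_lt (N := N) (by omega) (by omega)]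
    push_cast
    linear_combination hz
  refine mem_image.2 ⟨(((a, b), c), x), ?_, ?_⟩
  · simp [schurTriples, ha, hb, hc, habc]
  · simp [schurTriangle, hz]

lemma cliqueFinset_schurGraph_subset [NeZero N] [DecidableRel (schurGraph N F).Adj]
    (hF : F ⊆ Icc 1 n) (hN : 3 * n < N) :
    (schurGraph N F).cliqueFinset 3 ⊆ (schurTriples F ×ˢ univ).image schurTriangle := by
  intro s hs
  obtain ⟨x, y, z, hxy, hxz, hyz, rfl⟩ :=
    SimpleGraph.is3Clique_iff.1 (SimpleGraph.mem_cliqueFinset_iff.1 hs)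
  simp only [schurGraph, SimpleGraph.fromRel_adj] at hxy hxz hyz
  have hN' : 2 * n < N := by omega
  have key : ∀ {p q r : ZMod N}, (∃ a ∈ F, q = p + a) → (∃ b ∈ F, r = q + b) →
      (∃ c ∈ F, r = p + c) → ∀ {t : Finset (ZMod N)}, t = {p, q, r} →
      t ∈ (schurTriples F ×ˢ univ).image schurTriangle := fun h₁ h₂ h₃ _ ht =>
    ht ▸ schurTriangle_mem_image hF hN' h₁ h₂ h₃
  rcases hxy.2 with hxy | hyx <;> rcases hyz.2 with hyz | hzy <;> rcases hxz.2 with hxz | hzx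
  · exact key hxy hyz hxz rfl
  · exact (not_cyclic_of_three_mul_lt hF hN hxy hyz hzx).elim
  · exact key hxz hzy hxy (by rw [pair_comm])
  · exact key hzx hxy hzy (by rw [insert_comm z x, pair_comm z y])
  · exact key hyx hxz hyz (by rw [insert_comm])
  · exact key hyz hzx hyx (by rw [insert_comm x y, pair_comm x z])
  · exact (not_cyclic_of_three_mul_lt hF hN hxz hzy hyx).elim
  · exact key hzy hyx hzx (by rw [insert_comm x y, pair_comm x z, insert_comm y z])

lemma card_cliqueFinset_schurGraph_le [NeZero N] [DecidableRel (schurGraph N F).Adj]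
    (hF : F ⊆ Icc 1 n) (hN : 3 * n < N) :
    #((schurGraph N F).cliqueFinset 3) ≤ #(schurTriples F) * N := by
  calc _ ≤ _ := card_le_card (cliqueFinset_schurGraph_subset hF hN)
    _ ≤ _ := card_image_le
    _ = _ := by rw [card_product, card_univ, ZMod.card]

lemma eq_of_sym2_add_eq (hF : F ⊆ Icc 1 n) (hN : 2 * n < N) {a b : ℕ} (ha : a ∈ F)
    (hb : b ∈ F) {u v : ZMod N} (h : s(u, u + a) = s(v, v + b)) : a = b ∧ u = v := by
  have ha' := mem_Icc.1 (hF ha); have hb' := mem_Icc.1 (hF hb)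
  rcases Sym2.eq_iff.1 h with ⟨rfl, h⟩ | ⟨hu, hv⟩
  · exact ⟨(ZMod.natCast_eq_natCast_iff_of_lt (by omega) (by omega)).1 (add_left_cancel h), rfl⟩
  · refine (ZMod.natCast_ne_zero_of_lt (a := a + b) (N := N) (by omega) (by omega) ?_).elim
    push_cast
    linear_combination hv - hu

lemma sum_card_not_adj_add_le [NeZero N] [DecidableRel (schurGraph N F).Adj]
    (hF : F ⊆ Icc 1 n) (hN : 2 * n < N) (H : SimpleGraph (ZMod N)) [DecidableRel H.Adj] :
    ∑ a ∈ F, #{u | ¬H.Adj u (u + a)} ≤ #((schurGraph N F).edgeFinset \ H.edgeFinset) := by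
  rw [← card_sigma]
  refine card_le_card_of_injOn (fun p => s(p.2, p.2 + p.1)) (fun p hp => ?_) ?_
  · obtain ⟨ha, hu⟩ := mem_sigma.1 hp
    have ha' := mem_Icc.1 (hF ha)
    simp only [coe_sdiff, Set.mem_sdiff, SimpleGraph.coe_edgeFinset, SimpleGraph.mem_edgeSet]
    exact ⟨schurGraph_adj_add ha (ZMod.natCast_ne_zero_of_lt (by omega) (by omega)) _,
      (mem_filter.1 hu).2⟩
  · rintro ⟨a, u⟩ hp ⟨b, v⟩ hq h
    obtain ⟨rfl, rfl⟩ := eq_of_sym2_add_eq hF hN (mem_sigma.1 hp).1 (mem_sigma.1 hq).1 h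
    rfl

end SchurGraph

/-- Deleting the elements `a` for which at least a third of the edges `{u, u + a}` are missing
from `H` leaves a sum-free set, since every triangle `{u, u + x, u + (x + y)}` misses an edge. -/
lemma exists_sumFree_sdiff_of_cliqueFree {N : ℕ} [NeZero N] (F : Finset ℕ)
    {H : SimpleGraph (ZMod N)} [DecidableRel H.Adj] (hH : H.CliqueFree 3) :
    ∃ C ⊆ F, #C * N ≤ 3 * ∑ a ∈ F, #{u : ZMod N | ¬H.Adj u (u + a)} ∧ SumFree (F \ C) := by
  set r : ℕ → ℕ := fun a => #{u : ZMod N | ¬H.Adj u (u + a)}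
  refine ⟨{a ∈ F | N ≤ 3 * r a}, filter_subset _ _, ?_, ?_⟩
  · rw [mul_sum, ← smul_eq_mul]
    exact (card_nsmul_le_sum _ _ _ fun a ha => (mem_filter.1 ha).2).trans
      (sum_le_sum_of_subset (filter_subset _ _))
  · intro x hx y hy hxy
    simp only [r, mem_sdiff, mem_filter, not_and, not_le] at hx hy hxy
    have hcover := hH.card_le_card_not_adj_add (x : ZMod N) y
    rw [ZMod.card, ← Nat.cast_add] at hcover
    have := hx.2 hx.1; have := hy.2 hy.1; have := hxy.2 hxy.1
    omega

theorem exists_sumFree_sdiff_of_card_schurTriples_le {ε : ℝ} (hε : 0 < ε) {n : ℕ} (hn : 1 ≤ n)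
    {F : Finset ℕ} (hF : F ⊆ Icc 1 n)
    (hT : (#(schurTriples F) : ℝ) ≤ SimpleGraph.triangleRemovalBound ε * n ^ 2) :
    ∃ C ⊆ F, (#C : ℝ) ≤ 12 * ε * n ∧ SumFree (F \ C) := by
  classical
  set N := 3 * n + 1
  have hN : 3 * n < N := by omega
  have : NeZero N := ⟨by omega⟩
  have hcliques : (#((schurGraph N F).cliqueFinset 3) : ℝ) <
      SimpleGraph.triangleRemovalBound ε * Fintype.card (ZMod N) ^ 3 := by
    have hδ := SimpleGraph.triangleRemovalBound_pos hε
    have hnN : (n : ℝ) < N := by exact_mod_cast hN.trans_le' (by omega)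
    rw [ZMod.card]
    calc (#((schurGraph N F).cliqueFinset 3) : ℝ) ≤ #(schurTriples F) * N := by
          exact_mod_cast card_cliqueFinset_schurGraph_le hF hN
      _ ≤ SimpleGraph.triangleRemovalBound ε * n ^ 2 * N := by gcongr
      _ < SimpleGraph.triangleRemovalBound ε * N ^ 3 := by
          rw [pow_succ _ 2, ← mul_assoc]; gcongr
  obtain ⟨G', hG'G, _, hedges, hG'⟩ := SimpleGraph.triangle_removal hcliques
  have hmissing : (∑ a ∈ F, #{u : ZMod N | ¬G'.Adj u (u + a)} : ℝ) < ε * N ^ 2 := by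
    have hsub := SimpleGraph.edgeFinset_mono hG'G
    calc _ ≤ (#((schurGraph N F).edgeFinset \ G'.edgeFinset) : ℝ) := by
          exact_mod_cast sum_card_not_adj_add_le hF (by omega) G'
      _ = #(schurGraph N F).edgeFinset - #G'.edgeFinset := by
          rw [card_sdiff_of_subset hsub, Nat.cast_sub (card_le_card hsub)]
      _ < ε * N ^ 2 := by simpa [ZMod.card] using hedges
  obtain ⟨C, hCF, hCN, hsf⟩ := exists_sumFree_sdiff_of_cliqueFree F hG'
  refine ⟨C, hCF, ?_, hsf⟩
  have hCN' : (#C : ℝ) * N < 3 * ε * N * N := by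
    have : (#C * N : ℝ) ≤ 3 * ∑ a ∈ F, (#{u : ZMod N | ¬G'.Adj u (u + a)} : ℝ) := by
      exact_mod_cast hCN
    nlinarith
  have hN4 : (N : ℝ) ≤ 4 * n := by exact_mod_cast (by omega : N ≤ 4 * n)
  nlinarith [lt_of_mul_lt_mul_right hCN' (Nat.cast_nonneg N)]

lemma three_le_two_rpow : (3 : ℝ) ≤ 2 ^ (1.585 : ℝ) := by
  have h : ((2 : ℝ) ^ (1.585 : ℝ)) ^ (200 : ℕ) = 2 ^ (317 : ℕ) := by
    rw [← Real.rpow_natCast, ← Real.rpow_mul (by norm_num), ← Real.rpow_natCast]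
    norm_num
  refine le_of_pow_le_pow_left₀ (by norm_num) (by positivity) (n := 200) ?_
  calc (3 : ℝ) ^ 200 ≤ 2 ^ 200 * 2 ^ 117 := by norm_num
    _ = _ := by rw [h, ← pow_add]

lemma le_two_rpow_of_pow_three_le {K b c : ℕ} {t : ℝ} (hK : K ^ 3 ≤ 2 ^ (3 * c) * 3 ^ b)
    (ht : 3 * c + 1.585 * b ≤ 3 * t) : (K : ℝ) ≤ 2 ^ t := by
  have h2 : (0 : ℝ) < 2 := by norm_num
  refine le_of_pow_le_pow_left₀ (by norm_num) (by positivity) (n := 3) ?_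
  calc (K : ℝ) ^ 3 ≤ 2 ^ (3 * c : ℕ) * 3 ^ b := by exact_mod_cast hK
    _ ≤ 2 ^ (3 * c : ℝ) * (2 ^ (1.585 : ℝ)) ^ b := by
        rw [← Real.rpow_natCast 2]; push_cast
        gcongr
        exact three_le_two_rpow
    _ = 2 ^ (3 * c + 1.585 * b : ℝ) := by
        rw [← Real.rpow_natCast, ← Real.rpow_mul h2.le, Real.rpow_add h2, mul_comm (1.585 : ℝ)]
    _ ≤ 2 ^ (3 * t) := Real.rpow_le_rpow_of_exponent_le (by norm_num) ht
    _ = (2 ^ t) ^ 3 := by rw [mul_comm, Real.rpow_mul h2.le, Real.rpow_ofNat]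

/-- There is `β > 0` such that for all large `n`: any `F ⊆ [n]` with at most `βn²`
Schur triples and `|F| ≤ 0.47n` contains at most `2^{0.249n}` maximal sum-free
subsets of `[n]`. -/
theorem small_container_bound : ∃ β : ℝ, 0 < β ∧ ∃ n₀ : ℕ, ∀ n : ℕ, n₀ ≤ n →
    ∀ F : Finset ℕ, F ⊆ Finset.Icc 1 n →
      (((((F ×ˢ F) ×ˢ F).filter (fun p => p.1.1 + p.1.2 = p.2)).card : ℝ) ≤ β * n ^ 2) →
      ((F.card : ℝ) ≤ 0.47 * n) →
      (fmaxIn n F : ℝ) ≤ (2 : ℝ) ^ ((0.249 : ℝ) * n) := by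
  have hε : (0 : ℝ) < 1 / 100000 := by norm_num
  refine ⟨_, SimpleGraph.triangleRemovalBound_pos hε, 1, fun n hn F hF hT hFcard => ?_⟩
  obtain ⟨C, hCF, hC, hB⟩ := exists_sumFree_sdiff_of_card_schurTriples_le hε hn hF hT
  have hcount := fmaxIn_union_pow_three_le hB (sdiff_subset.trans hF) (C := C)
  rw [sdiff_union_of_subset hCF] at hcount
  have hBcard : (#(F \ C) : ℝ) ≤ 0.47 * n :=
    le_trans (by exact_mod_cast card_le_card sdiff_subset) hFcard
  exact le_two_rpow_of_pow_three_le hcount (by linarith)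
end

section
/- For every sufficiently small ε > 0 and every sufficiently large constant K, for all sufficiently large n the following holds: the number of maximal sum-free subsets M of [n] satisfying (α) min(M) ∈ [(1/4 − 175ε)n, (1/4 + 175ε)n], (β) either |M| = 1 or min₂(M) ≥ (1/2 − 350ε)n, and additionally |min(M) − n/4| ≥ 50K and (|M| = 1 or min₂(M) ≥ n/2 − K), is at most ε·2^{n/4}. -/
/-!
Let `a = min M` and suppose all other elements of `M` lie in `[c, n]`. Then `B = M \ {a}` is an
independent set of the graph `x ~ x + a` on `[c, n]` which dominates every vertex outside a set `W`
of `O(n - 2c)` exceptional vertices: adding any other `t ∉ M` to `M` can only create the Schur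
triples `a + (t - a) = t` or `t + a = t + a`. When `n < c + 3a` the components of this graph are
paths with at most three vertices, so `B` is determined by its trace on `W`, on `W + a`, and on the
first vertices of the paths with at least two vertices, of which there are at most
`min(a, n + 1 - c - a)`. With `c ≈ n/2 - K` the count is thus `2 ^ O(K)` times a sum of
`2 ^ min(a, n/2 - a)` over `|a - n/4| ≥ 50K`, i.e. two geometric series of size `2 ^ (n/4 - 50K)`.
-/

open Finset

structure IsShiftDominating (c n a : ℕ) (W B : Finset ℕ) : Prop where
  subset : B ⊆ Icc c n
  add_notMem : ∀ x ∈ B, x + a ∉ B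
  dominate : ∀ t ∈ Icc c n, t ∉ W → t ∉ B → t - a ∈ B ∨ t + a ∈ B

def keySet (c n a : ℕ) (W : Finset ℕ) : Finset ℕ :=
  W ∪ W.image (· + a) ∪ Ico c (min (c + a) (n + 1 - a))

theorem card_keySet_le (c n a : ℕ) (W : Finset ℕ) :
    #(keySet c n a W) ≤ 2 * #W + min a (n + 1 - c - a) := by
  have := card_union_le (W ∪ W.image (· + a)) (Ico c (min (c + a) (n + 1 - a)))
  have := card_union_le W (W.image (· + a))
  have := card_image_le (s := W) (f := (· + a))
  rw [Nat.card_Ico] at *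
  unfold keySet
  omega

namespace IsShiftDominating

variable {c n a : ℕ} {W B B₁ B₂ : Finset ℕ}

theorem mem_iff_sub_notMem (hB : IsShiftDominating c n a W B) (hac : a ≤ c)
    (hrun : n < c + 3 * a) {x : ℕ} (hx : x ∈ Icc c n) (hxK : x ∉ keySet c n a W) :
    x ∈ B ↔ x - a ∉ B := by
  simp only [keySet, mem_union, mem_image, mem_Ico, not_or, not_exists, not_and] at hxK
  obtain ⟨⟨hxW, hxWa⟩, hxI⟩ := hxK
  rw [mem_Icc] at hx
  constructor
  · intro hxB hsub
    exact hB.add_notMem _ hsub (by rwa [Nat.sub_add_cancel (by omega)])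
  · intro hsub
    by_contra hxB
    by_cases hfar : c + a ≤ x ∧ x + a ≤ n
    · -- `x - a` can only be dominated by `x`, as `x - 2a < c`
      have hsubW : x - a ∉ W := fun h => hxWa _ h (by omega)
      rcases hB.dominate (x - a) (mem_Icc.mpr (by omega)) hsubW hsub with h | h
      · have := mem_Icc.mp (hB.subset h); omega
      · exact hxB (by rwa [Nat.sub_add_cancel (by omega)] at h)
    · rcases hB.dominate x (mem_Icc.mpr hx) hxW hxB with h | h
      · exact hsub h
      · have := mem_Icc.mp (hB.subset h); omega

theorem eq_of_inter_keySet_eq (hB₁ : IsShiftDominating c n a W B₁)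
    (hB₂ : IsShiftDominating c n a W B₂) (ha : 0 < a) (hac : a ≤ c) (hrun : n < c + 3 * a)
    (h : B₁ ∩ keySet c n a W = B₂ ∩ keySet c n a W) : B₁ = B₂ := by
  ext x
  induction x using Nat.strong_induction_on with
  | _ x ih =>
  by_cases hx : x ∈ Icc c n
  · by_cases hxK : x ∈ keySet c n a W
    · simpa [hxK] using Finset.ext_iff.mp h x
    · rw [hB₁.mem_iff_sub_notMem hac hrun hx hxK, hB₂.mem_iff_sub_notMem hac hrun hx hxK,
        ih (x - a) (by rw [mem_Icc] at hx; omega)]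
  · exact iff_of_false (fun h => hx (hB₁.subset h)) (fun h => hx (hB₂.subset h))

end IsShiftDominating

/-- Contains every `t ∈ [c, n]` with `t + t ≤ n` or `t + m ≤ n`, or with `t = m + m'` or `t = a + a`,
where `m, m' ≥ c`. -/
def exceptionalSet (n c a : ℕ) : Finset ℕ := Icc c (n - c) ∪ Icc (2 * c) n ∪ {2 * a}

theorem card_exceptionalSet_le (n c a : ℕ) :
    #(exceptionalSet n c a) ≤ 2 * (n + 1 - 2 * c) + 1 := by
  have := card_union_le (Icc c (n - c) ∪ Icc (2 * c) n) {2 * a}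
  have := card_union_le (Icc c (n - c)) (Icc (2 * c) n)
  rw [Nat.card_Icc, Nat.card_Icc, card_singleton] at *
  unfold exceptionalSet
  omega

namespace MaxSF

variable {n : ℕ} {M : Finset ℕ}

theorem exists_add_mem_insert (hM : MaxSF n M) {t : ℕ} (ht : t ∈ Icc 1 n) (htM : t ∉ M) :
    ∃ x ∈ insert t M, ∃ y ∈ insert t M, x + y ∈ insert t M := by
  by_contra! h
  exact htM (hM.2.2 _ (insert_subset ht hM.1) h (subset_insert t M) ▸ mem_insert_self t M)

theorem card_ne_one (hM : MaxSF n M) {a : ℕ} (ha : a ∈ M) (h3 : 3 ≤ a) : #M ≠ 1 := by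
  intro h
  obtain ⟨m, rfl⟩ := card_eq_one.mp h
  obtain rfl := mem_singleton.mp ha
  have := mem_Icc.mp (hM.1 ha)
  obtain ⟨x, hx, y, hy, hxy⟩ :=
    hM.exists_add_mem_insert (t := 1) (by simp; omega) (by simp; omega)
  simp only [mem_insert, mem_singleton] at hx hy hxy
  omega

theorem isShiftDominating_erase (hM : MaxSF n M) {a c : ℕ} (haM : a ∈ M) (hac : a < c)
    (hc : ∀ x ∈ M, x ≠ a → c ≤ x) :
    IsShiftDominating c n a (exceptionalSet n c a) (M.erase a) where
  subset x hx := by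
    obtain ⟨hxa, hxM⟩ := mem_erase.mp hx
    exact mem_Icc.mpr ⟨hc x hxM hxa, (mem_Icc.mp (hM.1 hxM)).2⟩
  add_notMem x hx hxa := hM.2.1 x (mem_of_mem_erase hx) a haM (mem_of_mem_erase hxa)
  dominate t ht htW htB := by
    simp only [exceptionalSet, mem_union, mem_Icc, mem_singleton, not_or, not_and, not_le]
      at ht htW
    have htM : t ∉ M := fun h => htB (mem_erase.mpr ⟨by omega, h⟩)
    have hmem : ∀ u ∈ insert t M, u = t ∨ u ∈ M ∧ (u = a ∨ c ≤ u ∧ u ≤ n) := by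
      intro u hu
      rcases mem_insert.mp hu with rfl | hu
      · exact Or.inl rfl
      · by_cases hua : u = a
        · exact Or.inr ⟨hu, Or.inl hua⟩
        · exact Or.inr ⟨hu, Or.inr ⟨hc u hu hua, (mem_Icc.mp (hM.1 hu)).2⟩⟩
    have ha1 := (mem_Icc.mp (hM.1 haM)).1
    obtain ⟨x, hx, y, hy, hxy⟩ := hM.exists_add_mem_insert (mem_Icc.mpr (by omega)) htM
    simp only [mem_erase]
    -- `t ∉ W` leaves only the triples `a + (t - a) = t` and `t + a = t + a`
    rcases hmem x hx with hx | ⟨hxM, hx | hx⟩ <;>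
    rcases hmem y hy with hy | ⟨hyM, hy | hy⟩ <;>
    rcases hmem _ hxy with h | ⟨hxyM, h | h⟩
    all_goals first
      | omega
      | exact absurd hxyM (hM.2.1 x hxM y hyM)
      | exact Or.inl ⟨by omega, by convert hyM using 1; omega⟩
      | exact Or.inl ⟨by omega, by convert hxM using 1; omega⟩
      | exact Or.inr ⟨by omega, by convert hxyM using 1; omega⟩

end MaxSF

theorem Set.ncard_le_sum_two_pow_card {α β : Type*} [DecidableEq α] {F : Set (Finset α)}
    (A : Finset β) (S : β → Finset α) (P : Finset α → β → Prop)
    (hP : ∀ M ∈ F, ∃ b ∈ A, P M b)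
    (hinj : ∀ b ∈ A, ∀ M M', P M b → P M' b → M ∩ S b = M' ∩ S b → M = M') :
    F.ncard ≤ ∑ b ∈ A, 2 ^ #(S b) := by
  rcases F.eq_empty_or_nonempty with rfl | ⟨M₀, hM₀⟩
  · simp
  have : Nonempty β := ⟨(hP M₀ hM₀).choose⟩
  choose! g hgA hgP using hP
  calc F.ncard ≤ (↑(A.sigma fun b => (S b).powerset) : Set (Σ _ : β, Finset α)).ncard := by
        refine Set.ncard_le_ncard_of_injOn (fun M => ⟨g M, M ∩ S (g M)⟩)
          (fun M hM => by simp [hgA M hM]) (fun M hM M' hM' hMM' => ?_)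
        obtain ⟨hg, hS⟩ := Sigma.mk.inj_iff.mp hMM'
        rw [heq_iff_eq, ← hg] at hS
        exact hinj _ (hgA M hM) M M' (hgP M hM) (hg ▸ hgP M' hM') hS
    _ = ∑ b ∈ A, 2 ^ #(S b) := by rw [Set.ncard_coe_finset, card_sigma]; simp

theorem sum_two_pow_lt_of_injOn {ι : Type*} [DecidableEq ι] {s : Finset ι} {g : ι → ℕ} {m : ℕ}
    (hg : Set.InjOn g s) (hm : ∀ i ∈ s, g i ≤ m) : ∑ i ∈ s, 2 ^ g i < 2 ^ (m + 1) := by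
  rw [← sum_image hg]
  exact Nat.geomSum_lt le_rfl (by simpa [Nat.lt_succ_iff] using hm)

theorem sum_two_pow_min_sub_lt {s : Finset ℕ} {N m : ℕ}
    (hs : ∀ a ∈ s, a ≤ N ∧ (a ≤ m ∨ N ≤ a + m)) :
    ∑ a ∈ s, 2 ^ min a (N - a) < 2 ^ (m + 2) := by
  rw [← sum_filter_add_sum_filter_not s (· ≤ m)]
  have hlow : ∑ a ∈ s.filter (· ≤ m), 2 ^ min a (N - a) < 2 ^ (m + 1) :=
    (sum_le_sum fun a _ => Nat.pow_le_pow_right two_pos (min_le_left _ _)).trans_lt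
      (sum_two_pow_lt_of_injOn (fun a _ b _ h => h) (fun a ha => (mem_filter.mp ha).2))
  have hhigh : ∑ a ∈ s.filter (¬ · ≤ m), 2 ^ min a (N - a) < 2 ^ (m + 1) := by
    refine (sum_le_sum fun a _ => Nat.pow_le_pow_right two_pos (min_le_right _ _)).trans_lt
      (sum_two_pow_lt_of_injOn (fun a ha b hb hab => ?_) (fun a ha => ?_))
    · have := (hs a (mem_filter.mp ha).1).1
      have := (hs b (mem_filter.mp hb).1).1
      omega
    · obtain ⟨ha, hm⟩ := mem_filter.mp ha
      have := hs a ha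
      omega
  rw [pow_succ]
  omega

theorem ncard_le_of_forall_maxSF {n c m : ℕ} {A : Finset ℕ} {F : Set (Finset ℕ)}
    (hA : ∀ a ∈ A, 0 < a ∧ a < c ∧ n < c + 3 * a ∧ a + c ≤ n + 1 ∧ (a ≤ m ∨ n + 1 ≤ a + c + m))
    (hF : ∀ M ∈ F, MaxSF n M ∧ ∃ a ∈ A, a ∈ M ∧ ∀ x ∈ M, x ≠ a → c ≤ x) :
    F.ncard ≤ 2 ^ (4 * (n + 1 - 2 * c) + m + 4) := by
  set d := n + 1 - 2 * c
  have hterm (a : ℕ) : 2 ^ #(keySet c n a (exceptionalSet n c a)) ≤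
      2 ^ (4 * d + 2) * 2 ^ min a (n + 1 - c - a) := by
    rw [← pow_add]
    have := card_keySet_le c n a (exceptionalSet n c a)
    have := card_exceptionalSet_le n c a
    exact Nat.pow_le_pow_right two_pos (by omega)
  calc F.ncard
      ≤ ∑ a ∈ A, 2 ^ #(keySet c n a (exceptionalSet n c a)) := by
        refine Set.ncard_le_sum_two_pow_card A _
          (fun M a => a ∈ M ∧ IsShiftDominating c n a (exceptionalSet n c a) (M.erase a))
          (fun M hM => ?_) (fun a ha M M' hM hM' hMM' => ?_)
        · obtain ⟨hmax, a, ha, haM, hc⟩ := hF M hM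
          exact ⟨a, ha, haM, hmax.isShiftDominating_erase haM (hA a ha).2.1 hc⟩
        · obtain ⟨ha0, hac, hrun, -⟩ := hA a ha
          have hB := hM.2.eq_of_inter_keySet_eq hM'.2 ha0 hac.le hrun
            (by rw [erase_inter, erase_inter, hMM'])
          rw [← insert_erase hM.1, ← insert_erase hM'.1, hB]
    _ ≤ ∑ a ∈ A, 2 ^ (4 * d + 2) * 2 ^ min a (n + 1 - c - a) := sum_le_sum fun a _ => hterm a
    _ ≤ 2 ^ (4 * d + 2) * 2 ^ (m + 2) := by
        rw [← mul_sum]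
        refine Nat.mul_le_mul_left _ (sum_two_pow_min_sub_lt fun a ha => ?_).le
        have := hA a ha
        omega
    _ = 2 ^ (4 * d + m + 4) := by ring

theorem ncard_le_two_rpow_of_forall_maxSF {n : ℕ} {K : ℝ} (hK : 0 ≤ K) (hn : 196 * K ≤ n)
    {F : Set (Finset ℕ)}
    (hF : ∀ M ∈ F, MaxSF n M ∧ ∃ a ∈ M, a < ⌈(n : ℝ) / 2 - K⌉₊ ∧
      n < ⌈(n : ℝ) / 2 - K⌉₊ + 3 * a ∧ 50 * K ≤ |(a : ℝ) - n / 4| ∧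
      ∀ x ∈ M, x ≠ a → ⌈(n : ℝ) / 2 - K⌉₊ ≤ x) :
    (F.ncard : ℝ) ≤ 2 ^ ((n : ℝ) / 4 - 41 * K + 9) := by
  set c := ⌈(n : ℝ) / 2 - K⌉₊
  set m := ⌊(n : ℝ) / 4 - 49 * K + 1⌋₊
  have hc₁ : (n : ℝ) / 2 - K ≤ c := Nat.le_ceil _
  have hc₂ : (c : ℝ) < n / 2 - K + 1 := Nat.ceil_lt_add_one (by linarith)
  have hm₁ : (m : ℝ) ≤ n / 4 - 49 * K + 1 := Nat.floor_le (by linarith)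
  have hm₂ : (n : ℝ) / 4 - 49 * K < m := by
    linarith [Nat.lt_floor_add_one ((n : ℝ) / 4 - 49 * K + 1)]
  have h2c : 2 * c ≤ n + 1 := by
    have : ((2 * c : ℕ) : ℝ) < n + 2 := by push_cast; linarith
    exact Nat.lt_succ_iff.mp (by exact_mod_cast this)
  have hd : ((n + 1 - 2 * c : ℕ) : ℝ) ≤ 2 * K + 1 := by
    rw [Nat.cast_sub h2c]; push_cast; linarith
  have hcount := ncard_le_of_forall_maxSF (n := n) (c := c) (m := m) (F := F)
    (A := (Icc 1 n).filter fun a => a < c ∧ n < c + 3 * a ∧ 50 * K ≤ |(a : ℝ) - n / 4|)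
    (fun a ha => ?_) (fun M hM => ?_)
  · calc (F.ncard : ℝ) ≤ (2 : ℝ) ^ (((4 * (n + 1 - 2 * c) + m + 4 : ℕ)) : ℝ) := by
          rw [Real.rpow_natCast]; exact_mod_cast hcount
      _ ≤ 2 ^ ((n : ℝ) / 4 - 41 * K + 9) :=
          Real.rpow_le_rpow_of_exponent_le one_le_two (by push_cast; linarith)
  · simp only [mem_filter, mem_Icc] at ha
    obtain ⟨⟨ha₁, -⟩, hac, hrun, hfar⟩ := ha
    refine ⟨ha₁, hac, hrun, by omega, ?_⟩
    rcases le_abs'.mp hfar with h | h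
    · exact Or.inl (Nat.lt_succ_iff.mp (by exact_mod_cast (by linarith : (a : ℝ) < m + 1)))
    · exact Or.inr (by exact_mod_cast (by linarith : (n : ℝ) < a + c + m))
  · obtain ⟨hmax, a, haM, hac, hrun, hfar, hc⟩ := hF M hM
    exact ⟨hmax, a, mem_filter.mpr ⟨hmax.1 haM, hac, hrun, hfar⟩, haM, hc⟩

theorem MaxSF.bounds_of_min_of_secondMin {n : ℕ} {ε K : ℝ} (hε : ε ≤ 1 / 4200) (hK : 1 ≤ K)
    (hn : 196 * K ≤ n) {M : Finset ℕ} (hM : MaxSF n M) {a : ℕ} (haM : a ∈ M)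
    (hmin : ∀ x ∈ M, a ≤ x) (ha₁ : ((1 / 4 : ℝ) - 175 * ε) * n ≤ a)
    (ha₂ : (a : ℝ) ≤ ((1 / 4 : ℝ) + 175 * ε) * n)
    (hβ : #M = 1 ∨
      ∃ a' ∈ M, ∃ b ∈ M, a' < b ∧ (∀ x ∈ M, x ≠ a' → b ≤ x) ∧ (n : ℝ) / 2 - K ≤ b) :
    a < ⌈(n : ℝ) / 2 - K⌉₊ ∧ n < ⌈(n : ℝ) / 2 - K⌉₊ + 3 * a ∧
      ∀ x ∈ M, x ≠ a → ⌈(n : ℝ) / 2 - K⌉₊ ≤ x := by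
  have hc : (n : ℝ) / 2 - K ≤ ⌈(n : ℝ) / 2 - K⌉₊ := Nat.le_ceil _
  have hεn : 175 * ε * n ≤ n / 24 := by nlinarith
  refine ⟨by exact_mod_cast (by linarith : (a : ℝ) < ⌈(n : ℝ) / 2 - K⌉₊),
    by exact_mod_cast (by linarith : (n : ℝ) < ⌈(n : ℝ) / 2 - K⌉₊ + 3 * a), ?_⟩
  rcases hβ with h1 | ⟨a', ha', b, hb, hab, hbmin, hbK⟩
  · exact absurd h1 (hM.card_ne_one haM (by exact_mod_cast (by linarith : (2 : ℝ) < a)))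
  · intro x hx hxa
    have ha'a : a' = a := by
      by_contra h
      have := hbmin a haM (Ne.symm h)
      have := hmin a' ha'
      omega
    exact (Nat.ceil_le.mpr hbK).trans (hbmin x hx (ha'a ▸ hxa))

/-- For sufficiently small `ε > 0` and sufficiently large `K`, for all large `n`:
the number of maximal sum-free subsets `M` of `[n]` with
`min(M) ∈ [(1/4 − 175ε)n, (1/4 + 175ε)n]`, `|min(M) − n/4| ≥ 50K`, and
(`|M| = 1` or the second smallest element lying in `[n/2 − K, n]` and being at
least `(1/2 − 350ε)n`), is at most `ε 2^{n/4}`. -/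
theorem few_with_min_away :
    ∃ ε₀ : ℝ, 0 < ε₀ ∧ ∀ ε : ℝ, 0 < ε → ε ≤ ε₀ →
      ∃ K₀ : ℝ, ∀ K : ℝ, K₀ ≤ K → ∃ n₀ : ℕ, ∀ n : ℕ, n₀ ≤ n →
        (Set.ncard {M : Finset ℕ | MaxSF n M ∧
            (∃ a ∈ M, (∀ x ∈ M, a ≤ x) ∧
              ((1 / 4 : ℝ) - 175 * ε) * n ≤ (a : ℝ) ∧
              (a : ℝ) ≤ ((1 / 4 : ℝ) + 175 * ε) * n ∧
              50 * K ≤ |(a : ℝ) - (n : ℝ) / 4|) ∧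
            (M.card = 1 ∨
              ∃ a ∈ M, ∃ b ∈ M, a < b ∧ (∀ x ∈ M, x ≠ a → b ≤ x) ∧
                ((1 / 2 : ℝ) - 350 * ε) * n ≤ (b : ℝ) ∧
                (n : ℝ) / 2 - K ≤ (b : ℝ))} : ℝ)
          ≤ ε * (2 : ℝ) ^ ((n : ℝ) / 4) := by
  refine ⟨1 / 4200, by norm_num, fun ε hε hε₀ =>
    ⟨1 - Real.logb 2 ε, fun K hK => ⟨⌈196 * K⌉₊, fun n hn => ?_⟩⟩⟩
  have hlog : Real.logb 2 ε ≤ 0 := Real.logb_nonpos one_lt_two hε.le (by linarith)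
  have hK₁ : 1 ≤ K := by linarith
  replace hn : 196 * K ≤ n := Nat.ceil_le.mp hn
  calc _ ≤ (2 : ℝ) ^ ((n : ℝ) / 4 - 41 * K + 9) := by
        refine ncard_le_two_rpow_of_forall_maxSF (by linarith) hn
          fun M ⟨hM, ⟨a, haM, hmin, ha₁, ha₂, hfar⟩, hβ⟩ => ?_
        obtain ⟨hac, hrun, hc⟩ := hM.bounds_of_min_of_secondMin hε₀ hK₁ hn haM hmin ha₁ ha₂
          (hβ.imp_right fun ⟨a', ha', b, hb, hab, hbmin, _, hbK⟩ =>
            ⟨a', ha', b, hb, hab, hbmin, hbK⟩)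
        exact ⟨hM, a, haM, hac, hrun, hfar, hc⟩
    _ ≤ 2 ^ (Real.logb 2 ε + n / 4) := Real.rpow_le_rpow_of_exponent_le one_le_two (by linarith)
    _ = ε * 2 ^ ((n : ℝ) / 4) := by
        rw [Real.rpow_add two_pos, Real.rpow_logb two_pos (by norm_num) hε]
end

section
/- Let K, ℓ ∈ ℕ, let n be divisible by 4 and sufficiently large in terms of K (e.g. n ≥ 10^5·K), let t be an integer with |t| ≤ 50K, and let S_0 ⊆ [50K]. Define n' := n + 4ℓ, m := n/4 − t, m' := n'/4 − t, S := {n/2 − a : a ∈ S_0} and S' := {n'/2 − a : a ∈ S_0}. Let L(n,m,S) denote the link graph of S ∪ {m} on the vertex set [n/2+1, n] ∩ ℤ, and similarly L(n',m',S') on [n'/2+1, n'] ∩ ℤ. Then L(n',m',S') is isomorphic (as a graph, possibly with loops) to the disjoint union of L(n,m,S) and a perfect matching on 2ℓ vertices (ℓ disjoint edges). -/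
/-- There is a loop at `x` in the link graph of `S`. -/
def LinkLoop (S : Finset ℕ) (x : ℕ) : Prop :=
  (x + x ∈ S) ∨ (∃ z ∈ S, ∃ z' ∈ S, z + z' = x) ∨ (∃ z ∈ S, ∃ z' ∈ S, x + z = z')

private lemma exists_f (u m ℓ : ℕ) : ∃ f : ℕ → ℕ, ∀ x,
    (x ≤ u ∧ f x = x + 2*ℓ) ∨ (u < x ∧ x ≤ u + m ∧ f x = x + 3*ℓ) ∨
    (u + m < x ∧ f x = x + 4*ℓ) := by
  refine ⟨fun x => if x ≤ u then x + 2*ℓ else if x ≤ u + m then x + 3*ℓ else x + 4*ℓ,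
    fun x => ?_⟩
  by_cases h1 : x ≤ u
  · exact Or.inl ⟨h1, by simp [h1]⟩
  · by_cases h2 : x ≤ u + m
    · exact Or.inr (Or.inl ⟨by omega, h2, by simp [h1, h2]⟩)
    · exact Or.inr (Or.inr ⟨by omega, by simp [h1, h2]⟩)

set_option maxHeartbeats 3200000 in
/-- With `n' = n + 4ℓ`, `m = n/4 − t`, `m' = n'/4 − t`, `S = n/2 − S₀` and
`S' = n'/2 − S₀`, the link graph `L(n', m', S')` of `S' ∪ {m'}` on `[n'/2 + 1, n']`
is isomorphic, as a graph possibly with loops, to the disjoint union of the link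
graph `L(n, m, S)` of `S ∪ {m}` on `[n/2 + 1, n]` and a perfect matching of `ℓ`
disjoint edges: there is an injection `f` of the vertex set of `L(n, m, S)` into
that of `L(n', m', S')` preserving adjacency and loops in both directions, such
that the `2ℓ` leftover vertices have no loops, send no edges to the image of `f`,
and each has exactly one neighbour among the leftover vertices. -/
theorem link_graph_iso (K ℓ n : ℕ) (hn4 : 4 ∣ n) (hnK : 10 ^ 5 * K ≤ n)
    (t : ℤ) (ht : |t| ≤ 50 * K) (S₀ : Finset ℕ) (hS₀ : S₀ ⊆ Finset.Icc 1 (50 * K))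
    (m m' : ℕ) (hm : (m : ℤ) = (n : ℤ) / 4 - t)
    (hm' : (m' : ℤ) = ((n : ℤ) + 4 * (ℓ : ℤ)) / 4 - t) :
    ∃ f : ℕ → ℕ,
      (∀ x ∈ Finset.Icc (n / 2 + 1) n,
        f x ∈ Finset.Icc ((n + 4 * ℓ) / 2 + 1) (n + 4 * ℓ)) ∧
      (∀ x ∈ Finset.Icc (n / 2 + 1) n, ∀ y ∈ Finset.Icc (n / 2 + 1) n,
        f x = f y → x = y) ∧
      (∀ x ∈ Finset.Icc (n / 2 + 1) n, ∀ y ∈ Finset.Icc (n / 2 + 1) n,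
        (LinkAdj (insert m (S₀.image (fun a => n / 2 - a))) x y ↔
          LinkAdj (insert m' (S₀.image (fun a => (n + 4 * ℓ) / 2 - a))) (f x) (f y))) ∧
      (∀ x ∈ Finset.Icc (n / 2 + 1) n,
        (LinkLoop (insert m (S₀.image (fun a => n / 2 - a))) x ↔
          LinkLoop (insert m' (S₀.image (fun a => (n + 4 * ℓ) / 2 - a))) (f x))) ∧
      (∀ v ∈ Finset.Icc ((n + 4 * ℓ) / 2 + 1) (n + 4 * ℓ),
        (∀ x ∈ Finset.Icc (n / 2 + 1) n, f x ≠ v) →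
          ¬ LinkLoop (insert m' (S₀.image (fun a => (n + 4 * ℓ) / 2 - a))) v ∧
          (∀ x ∈ Finset.Icc (n / 2 + 1) n,
            ¬ LinkAdj (insert m' (S₀.image (fun a => (n + 4 * ℓ) / 2 - a))) (f x) v) ∧
          (∃! w : ℕ, w ∈ Finset.Icc ((n + 4 * ℓ) / 2 + 1) (n + 4 * ℓ) ∧
            (∀ x ∈ Finset.Icc (n / 2 + 1) n, f x ≠ w) ∧
            LinkAdj (insert m' (S₀.image (fun a => (n + 4 * ℓ) / 2 - a))) v w)) := by
  obtain ⟨q, rfl⟩ := hn4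
  norm_num at hnK
  have ht' := abs_le.mp ht
  push_cast at hm hm'
  have hq : 25000 * K ≤ q := by omega
  have hm1 : q ≤ m + 50 * K := by omega
  have hm2 : m ≤ q + 50 * K := by omega
  have hml : m' = m + ℓ := by omega
  clear hm hm' ht ht' hnK
  have hA : ∀ a ∈ S₀, 1 ≤ a ∧ a ≤ 50 * K := fun a ha => Finset.mem_Icc.mp (hS₀ ha)
  have h24 : 4 * q / 2 = 2 * q := by omega
  have h24' : (4 * q + 4 * ℓ) / 2 = 2 * q + 2 * ℓ := by omega
  obtain ⟨f, hreg⟩ := exists_f (2 * q + 10000 * K) m ℓ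
  have hGap : ∀ v, 2*q+2*ℓ+1 ≤ v → v ≤ 4*q+4*ℓ →
      (∀ x, 2*q+1 ≤ x ∧ x ≤ 4*q → f x ≠ v) →
      (2*q+10000*K+2*ℓ < v ∧ v ≤ 2*q+10000*K+3*ℓ) ∨
      (2*q+10000*K+m+3*ℓ < v ∧ v ≤ 2*q+10000*K+m+4*ℓ) := by
    intro v h1 h2 hv
    by_contra hcon
    push_neg at hcon
    rcases le_or_gt v (2*q+10000*K+2*ℓ) with hc | hc
    · exact hv (v - 2*ℓ) ⟨by omega, by omega⟩ (by have := hreg (v - 2*ℓ); omega)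
    · rcases le_or_gt v (2*q+10000*K+m+3*ℓ) with hc2 | hc2
      · exact hv (v - 3*ℓ) ⟨by omega, by omega⟩ (by have := hreg (v - 3*ℓ); omega)
      · exact hv (v - 4*ℓ) ⟨by omega, by omega⟩ (by have := hreg (v - 4*ℓ); omega)
  simp only [h24, h24', LinkAdj, LinkLoop, SchurTriple, Finset.mem_Icc,
    Finset.mem_insert, Finset.mem_image]
  refine ⟨f, ?_, ?_, ?_, ?_, ?_⟩
  · intro x hx; have := hreg x; omega
  · intro x hx y hy h; have := hreg x; have := hreg y; omega
  · intro x hx y hy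
    have Fx := hreg x; have Fy := hreg y
    constructor
    · rintro ⟨hne, z, (rfl | ⟨a, haS, rfl⟩), hsch⟩
      · exact ⟨by omega, m', Or.inl rfl, by omega⟩
      · have hb := hA a haS
        exact ⟨by omega, 2*q+2*ℓ-a, Or.inr ⟨a, haS, rfl⟩, by omega⟩
    · rintro ⟨hne, z, (rfl | ⟨a, haS, rfl⟩), hsch⟩
      · exact ⟨by omega, m, Or.inl rfl, by omega⟩
      · have hb := hA a haS
        exact ⟨by omega, 2*q-a, Or.inr ⟨a, haS, rfl⟩, by omega⟩
  · intro x hx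
    have Fx := hreg x
    constructor
    · rintro ((h | ⟨a, haS, ha⟩) |
        ⟨z, (rfl | ⟨a, haS, rfl⟩), z', (rfl | ⟨b, hbS, rfl⟩), hzz⟩ |
        ⟨z, (rfl | ⟨a, haS, rfl⟩), z', (rfl | ⟨b, hbS, rfl⟩), hzz⟩)
      · exact absurd h (by omega)
      · have := hA a haS; exact absurd ha (by omega)
      · exact Or.inr (Or.inl ⟨m', Or.inl rfl, m', Or.inl rfl, by omega⟩)
      · have := hA b hbS
        exact Or.inr (Or.inl ⟨m', Or.inl rfl, 2*q+2*ℓ-b, Or.inr ⟨b, hbS, rfl⟩, by omega⟩)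
      · have := hA a haS
        exact Or.inr (Or.inl ⟨2*q+2*ℓ-a, Or.inr ⟨a, haS, rfl⟩, m', Or.inl rfl, by omega⟩)
      · have := hA a haS; have := hA b hbS
        exact Or.inr (Or.inl ⟨2*q+2*ℓ-a, Or.inr ⟨a, haS, rfl⟩, 2*q+2*ℓ-b,
          Or.inr ⟨b, hbS, rfl⟩, by omega⟩)
      · exact absurd hzz (by omega)
      · have := hA b hbS; exact absurd hzz (by omega)
      · have := hA a haS; exact absurd hzz (by omega)
      · have := hA a haS; have := hA b hbS; exact absurd hzz (by omega)
    · rintro ((h | ⟨a, haS, ha⟩) |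
        ⟨z, (rfl | ⟨a, haS, rfl⟩), z', (rfl | ⟨b, hbS, rfl⟩), hzz⟩ |
        ⟨z, (rfl | ⟨a, haS, rfl⟩), z', (rfl | ⟨b, hbS, rfl⟩), hzz⟩)
      · exact absurd h (by omega)
      · have := hA a haS; exact absurd ha (by omega)
      · exact Or.inr (Or.inl ⟨m, Or.inl rfl, m, Or.inl rfl, by omega⟩)
      · have := hA b hbS
        exact Or.inr (Or.inl ⟨m, Or.inl rfl, 2*q-b, Or.inr ⟨b, hbS, rfl⟩, by omega⟩)
      · have := hA a haS
        exact Or.inr (Or.inl ⟨2*q-a, Or.inr ⟨a, haS, rfl⟩, m, Or.inl rfl, by omega⟩)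
      · have := hA a haS; have := hA b hbS
        exact Or.inr (Or.inl ⟨2*q-a, Or.inr ⟨a, haS, rfl⟩, 2*q-b,
          Or.inr ⟨b, hbS, rfl⟩, by omega⟩)
      · exact absurd hzz (by omega)
      · have := hA b hbS; exact absurd hzz (by omega)
      · have := hA a haS; exact absurd hzz (by omega)
      · have := hA a haS; have := hA b hbS; exact absurd hzz (by omega)
  · intro v hv hvimg
    obtain ⟨hv1, hv2⟩ := hv
    have hG := hGap v hv1 hv2 hvimg
    refine ⟨?_, ?_, ?_⟩
    · rintro ((h | ⟨a, haS, ha⟩) |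
        ⟨z, (rfl | ⟨a, haS, rfl⟩), z', (rfl | ⟨b, hbS, rfl⟩), hzz⟩ |
        ⟨z, (rfl | ⟨a, haS, rfl⟩), z', (rfl | ⟨b, hbS, rfl⟩), hzz⟩)
      · omega
      · have := hA a haS; omega
      · omega
      · have := hA b hbS; omega
      · have := hA a haS; omega
      · have := hA a haS; have := hA b hbS; omega
      · omega
      · have := hA b hbS; omega
      · have := hA a haS; omega
      · have := hA a haS; have := hA b hbS; omega
    · intro x hx
      rintro ⟨hne, z, (rfl | ⟨a, haS, rfl⟩), hsch⟩
      · have Fx := hreg x; omega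
      · have Fx := hreg x; have := hA a haS; omega
    · rcases hG with hG1 | hG2
      · refine ⟨v + m', ⟨⟨by omega, by omega⟩, fun x hx => by have := hreg x; omega,
          by omega, m', Or.inl rfl, by omega⟩, ?_⟩
        rintro w' ⟨⟨hw1, hw2⟩, hw'img, hne, z, (rfl | ⟨a, haS, rfl⟩), hsch⟩
        · have hG' := hGap w' hw1 hw2 hw'img; omega
        · have hG' := hGap w' hw1 hw2 hw'img; have := hA a haS; omega
      · refine ⟨v - m', ⟨⟨by omega, by omega⟩, fun x hx => by have := hreg x; omega,
          by omega, m', Or.inl rfl, by omega⟩, ?_⟩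
        rintro w' ⟨⟨hw1, hw2⟩, hw'img, hne, z, (rfl | ⟨a, haS, rfl⟩), hsch⟩
        · have hG' := hGap w' hw1 hw2 hw'img; omega
        · have hG' := hGap w' hw1 hw2 hw'img; have := hA a haS; omega
end

section
/- For every n ∈ ℕ, the number f'_max(n) of maximal sum-free subsets of [n] that contain exactly one even number satisfies: Σ_{x ∈ E} MIS(L_x[O]) − 2·Σ_{{x,x'} ⊆ E, x ≠ x'} MIS(L_{{x,x'}}[O]) ≤ f'_max(n) ≤ Σ_{x ∈ E} MIS(L_x[O]), where the second sum is over unordered pairs of distinct even numbers in [n]. -/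
/-- `I` is an independent set of the link graph of `S` on vertex set `B`. -/
def LinkIndep (S B I : Finset ℕ) : Prop :=
  I ⊆ B ∧ (∀ x ∈ I, ¬ LinkLoop S x) ∧ (∀ x ∈ I, ∀ y ∈ I, ¬ LinkAdj S x y)

/-- `I` is a maximal independent set of the link graph of `S` on vertex set `B`. -/
def LinkMaxIndep (S B I : Finset ℕ) : Prop :=
  LinkIndep S B I ∧ ∀ J : Finset ℕ, LinkIndep S B J → I ⊆ J → I = J

/-- The number of maximal independent sets of the link graph of `S` on `B`. -/
noncomputable def MISlink (S B : Finset ℕ) : ℕ :=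
  Set.ncard {I : Finset ℕ | LinkMaxIndep S B I}

/-- The even numbers of `[n]`. -/
def Evens (n : ℕ) : Finset ℕ := (Finset.Icc 1 n).filter (fun k => k % 2 = 0)

/-- The odd numbers of `[n]`. -/
def Odds (n : ℕ) : Finset ℕ := (Finset.Icc 1 n).filter (fun k => k % 2 = 1)

/-- The number `f'_max(n)` of maximal sum-free subsets of `[n]` containing exactly
one even number. -/
noncomputable def fmax' (n : ℕ) : ℕ :=
  Set.ncard {M : Finset ℕ | MaxSF n M ∧ (M.filter (fun x => x % 2 = 0)).card = 1}

open Finset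
open scoped Classical

lemma sumFree_subset {S T : Finset ℕ} (h : T ⊆ S) (hS : SumFree S) : SumFree T :=
  fun x hx y hy hxy => hS x (h hx) y (h hy) (h hxy)

lemma mem_evens {n x : ℕ} : x ∈ Evens n ↔ (1 ≤ x ∧ x ≤ n) ∧ x % 2 = 0 := by
  simp [Evens, Finset.mem_filter, Finset.mem_Icc]

lemma mem_odds {n x : ℕ} : x ∈ Odds n ↔ (1 ≤ x ∧ x ≤ n) ∧ x % 2 = 1 := by
  simp [Odds, Finset.mem_filter, Finset.mem_Icc]

lemma odds_subset_Icc {n : ℕ} : Odds n ⊆ Finset.Icc 1 n := Finset.filter_subset _ _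

noncomputable def misF (S B : Finset ℕ) : Finset (Finset ℕ) :=
  B.powerset.filter (fun I => LinkMaxIndep S B I)

lemma MISlink_eq (S B : Finset ℕ) : MISlink S B = (misF S B).card := by
  have h : {I : Finset ℕ | LinkMaxIndep S B I} = ↑(misF S B) := by
    ext I
    simp only [misF, Set.mem_setOf_eq, Finset.coe_filter, Finset.mem_powerset,
      Set.mem_setOf_eq]
    exact ⟨fun h => ⟨h.1.1, h⟩, fun h => h.2⟩
  rw [MISlink, h, Set.ncard_coe_finset]

lemma linkIndep_mono {S T B I : Finset ℕ} (h : S ⊆ T) (hI : LinkIndep T B I) :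
    LinkIndep S B I := by
  obtain ⟨h1, h2, h3⟩ := hI
  refine ⟨h1, fun x hx hl => h2 x hx ?_, fun x hx y hy ha => h3 x hx y hy ?_⟩
  · rcases hl with h' | ⟨z, hz, z', hz', he⟩ | ⟨z, hz, z', hz', he⟩
    · exact Or.inl (h h')
    · exact Or.inr (Or.inl ⟨z, h hz, z', h hz', he⟩)
    · exact Or.inr (Or.inr ⟨z, h hz, z', h hz', he⟩)
  · exact ⟨ha.1, ha.2.choose, h ha.2.choose_spec.1, ha.2.choose_spec.2⟩

lemma indep_iff {n : ℕ} {S I : Finset ℕ} (hS : S ⊆ Evens n) (hSf : SumFree S)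
    (hI : I ⊆ Odds n) : LinkIndep S (Odds n) I ↔ SumFree (S ∪ I) := by
  constructor
  · rintro ⟨-, hloop, hadj⟩ a ha b hb hc
    have hSinfo : ∀ c ∈ S, 1 ≤ c ∧ c % 2 = 0 := fun c hc =>
      ⟨(mem_evens.1 (hS hc)).1.1, (mem_evens.1 (hS hc)).2⟩
    have hIinfo : ∀ c ∈ I, 1 ≤ c ∧ c % 2 = 1 := fun c hc =>
      ⟨(mem_odds.1 (hI hc)).1.1, (mem_odds.1 (hI hc)).2⟩
    rcases Finset.mem_union.1 ha with ha | ha <;>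
      rcases Finset.mem_union.1 hb with hb | hb <;>
      rcases Finset.mem_union.1 hc with hc | hc
    · exact hSf a ha b hb hc
    · exact hloop _ hc (Or.inr (Or.inl ⟨a, ha, b, hb, rfl⟩))
    · exact hloop b hb (Or.inr (Or.inr ⟨a, ha, a + b, hc, by omega⟩))
    · have hne : b ≠ a + b := by have := (hSinfo a ha).1; omega
      exact hadj b hb (a + b) hc ⟨hne, a, ha, Or.inr (Or.inl (by omega))⟩
    · exact hloop a ha (Or.inr (Or.inr ⟨b, hb, a + b, hc, rfl⟩))
    · have hne : a ≠ a + b := by have := (hSinfo b hb).1; omega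
      exact hadj a ha (a + b) hc ⟨hne, b, hb, Or.inr (Or.inl rfl)⟩
    · by_cases hab : a = b
      · subst hab; exact hloop a ha (Or.inl hc)
      · exact hadj a ha b hb ⟨hab, a + b, hc, Or.inl rfl⟩
    · have := (hIinfo a ha).2; have := (hIinfo b hb).2
      have := (hIinfo _ hc).2; omega
  · intro hsf
    refine ⟨hI, ?_, ?_⟩
    · rintro x hx (h | ⟨z, hz, z', hz', he⟩ | ⟨z, hz, z', hz', he⟩)
      · exact hsf x (Finset.mem_union_right _ hx) x (Finset.mem_union_right _ hx)
          (Finset.mem_union_left _ h)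
      · exact hsf z (Finset.mem_union_left _ hz) z' (Finset.mem_union_left _ hz')
          (he ▸ Finset.mem_union_right _ hx)
      · exact hsf x (Finset.mem_union_right _ hx) z (Finset.mem_union_left _ hz)
          (he ▸ Finset.mem_union_left _ hz')
    · rintro x hx y hy ⟨hne, z, hz, (h | h | h)⟩
      · exact hsf x (Finset.mem_union_right _ hx) y (Finset.mem_union_right _ hy)
          (h ▸ Finset.mem_union_left _ hz)
      · exact hsf x (Finset.mem_union_right _ hx) z (Finset.mem_union_left _ hz)
          (h ▸ Finset.mem_union_right _ hy)
      · exact hsf y (Finset.mem_union_right _ hy) z (Finset.mem_union_left _ hz)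
          (h ▸ Finset.mem_union_right _ hx)

lemma exists_maxSF {n : ℕ} {A : Finset ℕ} (hA : A ⊆ Finset.Icc 1 n) (hAf : SumFree A) :
    ∃ M, MaxSF n M ∧ A ⊆ M := by
  classical
  set fam := ((Finset.Icc 1 n).powerset.filter (fun B => SumFree B ∧ A ⊆ B)) with hfam
  have hAmem : A ∈ fam := by
    simp [hfam, Finset.mem_powerset, hA, hAf]
  obtain ⟨M, hM, hMmax⟩ := fam.exists_max_image Finset.card ⟨A, hAmem⟩
  simp only [hfam, Finset.mem_filter, Finset.mem_powerset] at hM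
  refine ⟨M, ⟨hM.1, hM.2.1, ?_⟩, hM.2.2⟩
  intro M' hM'sub hM'sf hMM'
  have hM'mem : M' ∈ fam := by
    simp only [hfam, Finset.mem_filter, Finset.mem_powerset]
    exact ⟨hM'sub, hM'sf, hM.2.2.trans hMM'⟩
  exact Finset.eq_of_subset_of_card_le hMM' (hMmax M' hM'mem)

noncomputable def goodF (n x : ℕ) : Finset (Finset ℕ) :=
  (misF {x} (Odds n)).filter (fun I => MaxSF n (insert x I))

noncomputable def badF (n x : ℕ) : Finset (Finset ℕ) :=
  (misF {x} (Odds n)).filter (fun I => ¬ MaxSF n (insert x I))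

lemma misF_card_split (n x : ℕ) :
    (misF {x} (Odds n)).card = (goodF n x).card + (badF n x).card :=
  (Finset.card_filter_add_card_filter_not (fun I => MaxSF n (insert x I))).symm

lemma eq_insert_filter {n x : ℕ} {M : Finset ℕ} (hM : M ⊆ Finset.Icc 1 n)
    (hx : M.filter (fun k => k % 2 = 0) = {x}) :
    M = insert x (M.filter (fun k => k % 2 = 1)) := by
  ext a
  simp only [Finset.mem_insert, Finset.mem_filter]
  constructor
  · intro ha
    by_cases h : a % 2 = 0
    · left
      have : a ∈ M.filter (fun k => k % 2 = 0) := Finset.mem_filter.2 ⟨ha, h⟩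
      rw [hx] at this; simpa using this
    · right; exact ⟨ha, by omega⟩
  · rintro (rfl | ⟨ha, -⟩)
    · have : a ∈ M.filter (fun k => k % 2 = 0) := by rw [hx]; simp
      exact (Finset.mem_filter.1 this).1
    · exact ha

lemma filter_odd_insert {n x : ℕ} {I : Finset ℕ} (hx : x % 2 = 0) (hI : I ⊆ Odds n) :
    (insert x I).filter (fun k => k % 2 = 1) = I := by
  ext a
  simp only [Finset.mem_filter, Finset.mem_insert]
  constructor
  · rintro ⟨rfl | ha, h2⟩
    · omega
    · exact ha
  · intro ha
    exact ⟨Or.inr ha, (mem_odds.1 (hI ha)).2⟩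

lemma filter_even_insert {n x : ℕ} {I : Finset ℕ} (hx : x % 2 = 0) (hI : I ⊆ Odds n) :
    (insert x I).filter (fun k => k % 2 = 0) = {x} := by
  ext a
  simp only [Finset.mem_filter, Finset.mem_insert, Finset.mem_singleton]
  constructor
  · rintro ⟨rfl | ha, h2⟩
    · rfl
    · have := (mem_odds.1 (hI ha)).2; omega
  · rintro rfl; exact ⟨Or.inl rfl, hx⟩

lemma sumFree_singleton {x : ℕ} (hx : 1 ≤ x) : SumFree {x} := by
  intro a ha b hb hc
  simp only [Finset.mem_singleton] at ha hb hc
  omega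

/-- Characterization of the two sides of the bijection. -/
lemma good_of_maxSF {n x : ℕ} {M : Finset ℕ} (hM : MaxSF n M)
    (hx : M.filter (fun k => k % 2 = 0) = {x}) :
    x ∈ Evens n ∧ M.filter (fun k => k % 2 = 1) ∈ goodF n x ∧
      M = insert x (M.filter (fun k => k % 2 = 1)) := by
  have hxM : x ∈ M ∧ x % 2 = 0 := by
    have : x ∈ M.filter (fun k => k % 2 = 0) := by rw [hx]; simp
    exact ⟨(Finset.mem_filter.1 this).1, (Finset.mem_filter.1 this).2⟩
  have hxE : x ∈ Evens n := mem_evens.2 ⟨Finset.mem_Icc.1 (hM.1 hxM.1), hxM.2⟩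
  have hx1 : 1 ≤ x := (mem_evens.1 hxE).1.1
  set I := M.filter (fun k => k % 2 = 1) with hIdef
  have hMeq : M = insert x I := eq_insert_filter hM.1 hx
  have hISub : I ⊆ Odds n := by
    intro a ha
    have := Finset.mem_filter.1 ha
    exact mem_odds.2 ⟨Finset.mem_Icc.1 (hM.1 this.1), this.2⟩
  have hsEv : ({x} : Finset ℕ) ⊆ Evens n := by simp [hxE]
  have hsSF : SumFree {x} := sumFree_singleton hx1
  have hunion : ({x} : Finset ℕ) ∪ I = M := by rw [hMeq, Finset.insert_eq]
  have hIindep : LinkIndep {x} (Odds n) I :=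
    (indep_iff hsEv hsSF hISub).2 (hunion ▸ hM.2.1)
  have hImax : LinkMaxIndep {x} (Odds n) I := by
    refine ⟨hIindep, fun J hJ hIJ => ?_⟩
    have hJsub : insert x J ⊆ Finset.Icc 1 n := by
      intro a ha
      rcases Finset.mem_insert.1 ha with rfl | ha
      · exact hM.1 hxM.1
      · exact odds_subset_Icc (hJ.1 ha)
    have hJsf : SumFree (insert x J) := by
      rw [Finset.insert_eq]; exact (indep_iff hsEv hsSF hJ.1).1 hJ
    have hMJ : M ⊆ insert x J := by
      rw [hMeq]; exact Finset.insert_subset_insert _ hIJ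
    have := hM.2.2 _ hJsub hJsf hMJ
    -- M = insert x J, so J ⊆ I
    apply Finset.Subset.antisymm hIJ
    intro a ha
    have haM : a ∈ M := this ▸ Finset.mem_insert_of_mem ha
    exact Finset.mem_filter.2 ⟨haM, (mem_odds.1 (hJ.1 ha)).2⟩
  refine ⟨hxE, ?_, hMeq⟩
  simp only [goodF, misF, Finset.mem_filter, Finset.mem_powerset]
  exact ⟨⟨hISub, hImax⟩, hMeq ▸ hM⟩

lemma maxSF_of_good {n x : ℕ} {I : Finset ℕ} (hx : x ∈ Evens n) (hI : I ∈ goodF n x) :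
    MaxSF n (insert x I) ∧ (insert x I).filter (fun k => k % 2 = 0) = {x} := by
  simp only [goodF, misF, Finset.mem_filter, Finset.mem_powerset] at hI
  exact ⟨hI.2, filter_even_insert (mem_evens.1 hx).2 hI.1.1⟩

lemma fmax'_eq (n : ℕ) : fmax' n = ∑ x ∈ Evens n, (goodF n x).card := by
  classical
  set Mset : Finset (Finset ℕ) :=
    (Evens n).biUnion (fun x => (goodF n x).image (insert x)) with hMset
  have hset : {M : Finset ℕ | MaxSF n M ∧ (M.filter (fun x => x % 2 = 0)).card = 1}
      = ↑Mset := by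
    ext M
    simp only [Set.mem_setOf_eq, hMset, Finset.coe_biUnion, Set.mem_iUnion,
      Finset.mem_coe, Finset.mem_image, Finset.mem_biUnion]
    constructor
    · rintro ⟨hM, hcard⟩
      obtain ⟨x, hx⟩ := Finset.card_eq_one.1 hcard
      obtain ⟨hxE, hgood, hMeq⟩ := good_of_maxSF hM hx
      exact ⟨x, hxE, _, hgood, hMeq.symm⟩
    · rintro ⟨x, hxE, I, hI, rfl⟩
      obtain ⟨hmax, hfe⟩ := maxSF_of_good hxE hI
      exact ⟨hmax, by rw [hfe]; simp⟩
  have h1 : fmax' n = Mset.card := by rw [fmax', hset, Set.ncard_coe_finset]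
  rw [h1]
  rw [Finset.card_biUnion]
  · refine Finset.sum_congr rfl (fun x hx => ?_)
    apply Finset.card_image_of_injOn
    intro I hI J hJ hIJ
    rw [Finset.mem_coe] at hI hJ
    simp only [goodF, misF, Finset.mem_filter, Finset.mem_powerset] at hI hJ
    have hx2 : x % 2 = 0 := (mem_evens.1 hx).2
    calc I = (insert x I).filter (fun k => k % 2 = 1) :=
          (filter_odd_insert hx2 hI.1.1).symm
      _ = (insert x J).filter (fun k => k % 2 = 1) := by rw [hIJ]
      _ = J := filter_odd_insert hx2 hJ.1.1
  · intro x hx y hy hxy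
    simp only [Finset.disjoint_left, Finset.mem_image]
    rintro M ⟨I, hI, rfl⟩ ⟨J, hJ, hMJ⟩
    have h1 := (maxSF_of_good hx hI).2
    have h2 := (maxSF_of_good hy hJ).2
    rw [hMJ] at h2
    rw [h1] at h2
    exact hxy (by simpa using h2)

lemma bad_key {n x : ℕ} {I : Finset ℕ} (hx : x ∈ Evens n) (hI : I ∈ badF n x) :
    ∃ x', x' ∈ Evens n ∧ x' ≠ x ∧ LinkMaxIndep {x, x'} (Odds n) I := by
  simp only [badF, misF, Finset.mem_filter, Finset.mem_powerset] at hI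
  obtain ⟨⟨hIsub, hImax⟩, hnot⟩ := hI
  have hx2 : x % 2 = 0 := (mem_evens.1 hx).2
  have hx1 : 1 ≤ x := (mem_evens.1 hx).1.1
  have hsEv : ({x} : Finset ℕ) ⊆ Evens n := by simp [hx]
  have hsSF : SumFree {x} := sumFree_singleton hx1
  have hxIcc : x ∈ Finset.Icc 1 n := Finset.mem_Icc.2 (mem_evens.1 hx).1
  have hsf : SumFree (insert x I) := by
    rw [Finset.insert_eq]; exact (indep_iff hsEv hsSF hIsub).1 hImax.1
  have hsub : insert x I ⊆ Finset.Icc 1 n := by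
    intro a ha; rcases Finset.mem_insert.1 ha with rfl | ha
    · exact hxIcc
    · exact odds_subset_Icc (hIsub ha)
  obtain ⟨M, hM, hMsup⟩ := exists_maxSF hsub hsf
  have hMne : M ≠ insert x I := fun h => hnot (h ▸ hM)
  set OM := M.filter (fun k => k % 2 = 1) with hOM
  have hOMsub : OM ⊆ Odds n := fun a ha =>
    mem_odds.2 ⟨Finset.mem_Icc.1 (hM.1 (Finset.mem_filter.1 ha).1),
      (Finset.mem_filter.1 ha).2⟩
  have hIOM : I ⊆ OM := fun a ha =>
    Finset.mem_filter.2 ⟨hMsup (Finset.mem_insert_of_mem ha), (mem_odds.1 (hIsub ha)).2⟩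
  have hxM : x ∈ M := hMsup (Finset.mem_insert_self _ _)
  have hex : ∃ x' ∈ M, x' % 2 = 0 ∧ x' ≠ x := by
    by_contra hcon
    push_neg at hcon
    have hfe : M.filter (fun k => k % 2 = 0) = {x} := by
      ext a
      simp only [Finset.mem_filter, Finset.mem_singleton]
      refine ⟨fun ⟨ha, h2⟩ => hcon a ha h2, ?_⟩
      rintro rfl; exact ⟨hxM, hx2⟩
    have hMeq : M = insert x OM := eq_insert_filter hM.1 hfe
    have hOMindep : LinkIndep {x} (Odds n) OM := by
      refine (indep_iff hsEv hsSF hOMsub).2 ?_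
      rw [← Finset.insert_eq, ← hMeq]; exact hM.2.1
    have hIeq : I = OM := hImax.2 OM hOMindep hIOM
    exact hMne (by rw [hMeq, hIeq])
  obtain ⟨x', hx'M, hx'2, hx'x⟩ := hex
  have hx'E : x' ∈ Evens n := mem_evens.2 ⟨Finset.mem_Icc.1 (hM.1 hx'M), hx'2⟩
  have hpairM : ({x, x'} : Finset ℕ) ⊆ M := by
    intro a ha; rcases Finset.mem_insert.1 ha with rfl | ha
    · exact hxM
    · rw [Finset.mem_singleton] at ha; subst ha; exact hx'M
  have hpairEv : ({x, x'} : Finset ℕ) ⊆ Evens n := by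
    intro a ha; rcases Finset.mem_insert.1 ha with rfl | ha
    · exact hx
    · rw [Finset.mem_singleton] at ha; subst ha; exact hx'E
  have hpairSF : SumFree {x, x'} := sumFree_subset hpairM hM.2.1
  have hOMindep' : LinkIndep {x, x'} (Odds n) OM := by
    refine (indep_iff hpairEv hpairSF hOMsub).2 (sumFree_subset ?_ hM.2.1)
    intro a ha
    rcases Finset.mem_union.1 ha with ha | ha
    · exact hpairM ha
    · exact (Finset.mem_filter.1 ha).1
  have hOMindep : LinkIndep {x} (Odds n) OM :=
    linkIndep_mono (by intro a ha; rw [Finset.mem_singleton] at ha; simp [ha]) hOMindep'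
  have hIeq : I = OM := hImax.2 OM hOMindep hIOM
  subst hIeq
  refine ⟨x', hx'E, hx'x, hOMindep', fun J hJ hIJ => ?_⟩
  exact hImax.2 J
    (linkIndep_mono (by intro a ha; rw [Finset.mem_singleton] at ha; simp [ha]) hJ) hIJ

lemma sum_bad_le (n : ℕ) :
    ∑ x ∈ Evens n, (badF n x).card
      ≤ 2 * ∑ P ∈ (Evens n).powersetCard 2, (misF P (Odds n)).card := by
  classical
  set s : Finset ((_ : ℕ) × Finset ℕ) := (Evens n).sigma (fun x => badF n x) with hs
  set t : Finset ((_ : Finset ℕ) × Finset ℕ) :=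
    ((Evens n).powersetCard 2).sigma (fun P => misF P (Odds n)) with ht
  have hcards : s.card = ∑ x ∈ Evens n, (badF n x).card := Finset.card_sigma _ _
  have hcardt : t.card = ∑ P ∈ (Evens n).powersetCard 2, (misF P (Odds n)).card :=
    Finset.card_sigma _ _
  set f : ((_ : ℕ) × Finset ℕ) → ((_ : Finset ℕ) × Finset ℕ) := fun p =>
    if h : ∃ x', x' ∈ Evens n ∧ x' ≠ p.1 ∧ LinkMaxIndep {p.1, x'} (Odds n) p.2
    then ⟨{p.1, h.choose}, p.2⟩ else ⟨∅, p.2⟩ with hf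
  have hfs : ∀ p ∈ s, ∃ x', x' ∈ Evens n ∧ x' ≠ p.1 ∧
      LinkMaxIndep {p.1, x'} (Odds n) p.2 := by
    rintro ⟨x, I⟩ hp
    rw [hs, Finset.mem_sigma] at hp
    exact bad_key hp.1 hp.2
  have hfval : ∀ p, ∀ hp : p ∈ s, f p = ⟨{p.1, (hfs p hp).choose}, p.2⟩ := by
    intro p hp
    rw [hf]
    exact dif_pos (hfs p hp)
  have himg : s.image f ⊆ t := by
    intro q hq
    rw [Finset.mem_image] at hq
    obtain ⟨p, hp, rfl⟩ := hq
    rw [hfval p hp]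
    obtain ⟨hE, hne, hmax⟩ := (hfs p hp).choose_spec
    rw [ht, Finset.mem_sigma]
    have hp1 : p.1 ∈ Evens n := (Finset.mem_sigma.1 (hs ▸ hp)).1
    constructor
    · rw [Finset.mem_powersetCard]
      refine ⟨?_, ?_⟩
      · intro a ha; rcases Finset.mem_insert.1 ha with rfl | ha
        · exact hp1
        · rw [Finset.mem_singleton] at ha; subst ha; exact hE
      · exact Finset.card_pair (Ne.symm hne)
    · rw [misF, Finset.mem_filter, Finset.mem_powerset]
      exact ⟨hmax.1.1, hmax⟩
  have hfiber : ∀ q ∈ s.image f, (s.filter (fun p => f p = q)).card ≤ 2 := by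
    intro q hq
    obtain ⟨P, J⟩ := q
    have hPcard : P.card = 2 := by
      have := himg hq
      rw [ht, Finset.mem_sigma, Finset.mem_powersetCard] at this
      exact this.1.2
    have hsubfib : s.filter (fun p => f p = ⟨P, J⟩) ⊆ P.sigma (fun _ => {J}) := by
      intro p hp
      rw [Finset.mem_filter] at hp
      obtain ⟨hps, hpq⟩ := hp
      rw [hfval p hps] at hpq
      have h1 : ({p.1, (hfs p hps).choose} : Finset ℕ) = P := congrArg Sigma.fst hpq
      have h2 : p.2 = J := by
        have := (Sigma.mk.inj_iff.1 hpq).2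
        exact eq_of_heq this
      rw [Finset.mem_sigma]
      exact ⟨h1 ▸ Finset.mem_insert_self _ _, by simp [h2]⟩
    calc (s.filter (fun p => f p = ⟨P, J⟩)).card
        ≤ (P.sigma (fun _ => ({J} : Finset (Finset ℕ)))).card :=
          Finset.card_le_card hsubfib
      _ = ∑ _a ∈ P, 1 := by rw [Finset.card_sigma]; simp
      _ = 2 := by rw [Finset.sum_const, smul_eq_mul, mul_one, hPcard]
  calc ∑ x ∈ Evens n, (badF n x).card = s.card := hcards.symm
    _ ≤ 2 * (s.image f).card := Finset.card_le_mul_card_image s 2 hfiber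
    _ ≤ 2 * t.card := by
        have := Finset.card_le_card himg
        omega
    _ = 2 * ∑ P ∈ (Evens n).powersetCard 2, (misF P (Odds n)).card := by rw [hcardt]

/-- `Σ_{x ∈ E} MIS(L_x[O]) − 2 Σ_{{x,x'} ⊆ E} MIS(L_{{x,x'}}[O]) ≤ f'_max(n)
≤ Σ_{x ∈ E} MIS(L_x[O])`. -/
theorem one_even_sandwich (n : ℕ) :
    (∑ x ∈ Evens n, (MISlink {x} (Odds n) : ℤ))
        - 2 * ∑ P ∈ (Evens n).powersetCard 2, (MISlink P (Odds n) : ℤ)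
      ≤ (fmax' n : ℤ) ∧
    (fmax' n : ℤ) ≤ ∑ x ∈ Evens n, (MISlink {x} (Odds n) : ℤ) := by
  have hsum : ∑ x ∈ Evens n, (MISlink {x} (Odds n) : ℤ)
      = ∑ x ∈ Evens n, ((goodF n x).card : ℤ)
        + ∑ x ∈ Evens n, ((badF n x).card : ℤ) := by
    rw [← Finset.sum_add_distrib]
    refine Finset.sum_congr rfl (fun x _ => ?_)
    rw [MISlink_eq, misF_card_split]
    push_cast; ring
  have hf : (fmax' n : ℤ) = ∑ x ∈ Evens n, ((goodF n x).card : ℤ) := by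
    rw [fmax'_eq]; push_cast; rfl
  have hP : ∑ P ∈ (Evens n).powersetCard 2, (MISlink P (Odds n) : ℤ)
      = ∑ P ∈ (Evens n).powersetCard 2, ((misF P (Odds n)).card : ℤ) :=
    Finset.sum_congr rfl (fun P _ => by rw [MISlink_eq])
  have hb : ∑ x ∈ Evens n, ((badF n x).card : ℤ)
      ≤ 2 * ∑ P ∈ (Evens n).powersetCard 2, ((misF P (Odds n)).card : ℤ) := by
    exact_mod_cast sum_bad_le n
  have hbnn : (0 : ℤ) ≤ ∑ x ∈ Evens n, ((badF n x).card : ℤ) :=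
    Finset.sum_nonneg (fun x _ => by positivity)
  constructor
  · rw [hsum, hf, hP]; linarith
  · rw [hsum, hf]; linarith
end

section
/- Let G be a finite abelian group of order n such that 3 divides n and n is not divisible by any prime p with p ≡ 2 (mod 3). Then f_max(G) ≥ 2^{(n−9)/6}. -/
/-- `S` is a sum-free subset of the abelian group `G`: no `x, y, z ∈ S` with `x + y = z`. -/
def SumFreeG {G : Type*} [AddCommGroup G] (S : Finset G) : Prop :=
  ∀ x ∈ S, ∀ y ∈ S, x + y ∉ S

/-- `M` is a maximal sum-free subset of the abelian group `G`. -/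
def MaxSFG {G : Type*} [AddCommGroup G] (M : Finset G) : Prop :=
  SumFreeG M ∧ ∀ M' : Finset G, SumFreeG M' → M ⊆ M' → M = M'

/-- The number of maximal sum-free subsets of `G`. -/
noncomputable def fmaxG (G : Type*) [AddCommGroup G] : ℕ :=
  Set.ncard {M : Finset G | MaxSFG M}

/-!
Since `3 ∣ |G|` there is a surjection `φ : G → ℤ/3`; fix `c` with `φ c = 2`. On the coset
`B = φ⁻¹(1)` the map `x ↦ c - x` is an involution, with at most one fixed point because `|G|` is
odd. Discarding also the pair `{2c, -c}` and picking one element from each remaining pair gives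
`R ⊆ B` with `|G| ≤ 6|R| + 9`. For every `T ⊆ R` the set `{c} ∪ T ∪ (c - (R \ T))` is sum-free
(a sum of two elements of `B` lies in `φ⁻¹(2)`, where only `c` could be hit), and every maximal
sum-free set `M` containing it satisfies `M ∩ R = T`. Hence there are at least `2^|R|` maximal
sum-free sets.
-/

open Finset Function

theorem AddCommGroup.exists_surjective_zmod_of_prime_dvd_card {G : Type*} [AddCommGroup G]
    [Finite G] {p : ℕ} (hp : p.Prime) (hdvd : p ∣ Nat.card G) :
    ∃ φ : G →+ ZMod p, Surjective φ := by
  classical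
  obtain ⟨ι, _, n, hn, ⟨e⟩⟩ := AddCommGroup.equiv_directSum_zmod_of_finite' G
  have : ∀ i, NeZero (n i) := fun i => ⟨by have := hn i; omega⟩
  have hcard : Nat.card G = ∏ i, n i := by
    rw [Nat.card_congr (e.toEquiv.trans DFinsupp.equivFunOnFintype)]
    simp
  obtain ⟨i, -, hi⟩ := (Prime.dvd_finsetProd_iff hp.prime n).mp (hcard ▸ hdvd)
  refine ⟨(ZMod.castHom hi (ZMod p)).toAddMonoidHom.comp
    ((DirectSum.component ℤ ι _ i).toAddMonoidHom.comp e.toAddMonoidHom), fun y => ?_⟩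
  refine ⟨e.symm (DirectSum.of _ i (y.val : ZMod (n i))), ?_⟩
  have : NeZero p := ⟨hp.ne_zero⟩
  simp [← DirectSum.lof_eq_of ℤ, DirectSum.component.lof_self]

theorem AddMonoidHom.card_eq_card_mul_card_fiber {G H : Type*} [AddGroup G] [Fintype G]
    [AddGroup H] [Fintype H] [DecidableEq H] (φ : G →+ H) (hφ : Surjective φ) (h : H) :
    Fintype.card G = Fintype.card H * #{x | φ x = h} := by
  rw [← card_univ, card_eq_sum_card_fiberwise (f := φ) (t := univ) (fun _ _ => mem_univ _),
    sum_congr rfl fun y _ => AddMonoidHom.card_fiber_eq_of_mem_range φ (hφ y) (hφ h),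
    sum_const, card_univ, smul_eq_mul]

theorem Function.Involutive.exists_free_half {α : Type*} [DecidableEq α] {σ : α → α}
    (hσ : Involutive σ) (D : Finset α) (hD : ∀ x ∈ D, σ x ∈ D) :
    ∃ R ⊆ D, (∀ x ∈ R, σ x ∉ R) ∧ #D ≤ 2 * #R + #{x ∈ D | σ x = x} := by
  let : LinearOrder α := IsWellOrder.linearOrder WellOrderingRel
  refine ⟨{x ∈ D | x < σ x}, filter_subset _ _, fun x hx hσx => ?_, ?_⟩
  · simp only [mem_filter, hσ x] at hx hσx
    exact lt_asymm hx.2 hσx.2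
  have hcover : D ⊆ {x ∈ D | x < σ x} ∪ {x ∈ D | x < σ x}.image σ ∪ {x ∈ D | σ x = x} := by
    intro x hx
    rcases lt_trichotomy x (σ x) with hlt | heq | hgt
    · simp [hx, hlt]
    · simp [hx, ← heq]
    · refine mem_union_left _ (mem_union_right _ (mem_image.mpr ⟨σ x, ?_, hσ x⟩))
      simp [hD x hx, hσ x, hgt]
  calc #D ≤ #({x ∈ D | x < σ x} ∪ {x ∈ D | x < σ x}.image σ ∪ {x ∈ D | σ x = x}) :=
        card_le_card hcover
    _ ≤ #{x ∈ D | x < σ x} + #{x ∈ D | x < σ x} + #{x ∈ D | σ x = x} := by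
        grw [card_union_le, card_union_le, card_image_le]
    _ = _ := by ring

theorem card_filter_add_self_eq_le_one {G : Type*} [AddCommGroup G] [Finite G] [DecidableEq G]
    (hG : (Nat.card G).Coprime 2) (s : Finset G) (c : G) : #{x ∈ s | x + x = c} ≤ 1 := by
  refine card_le_one.mpr fun x hx y hy => (Nat.Coprime.nsmul_right_bijective hG).injective ?_
  simp only [mem_filter] at hx hy
  simp only [two_nsmul, hx.2, hy.2]

theorem maxSFG_iff_maximal {G : Type*} [AddCommGroup G] (M : Finset G) :
    MaxSFG M ↔ Maximal SumFreeG M := by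
  refine and_congr_right fun _ => forall₃_congr fun M' _ hMM' => ?_
  exact ⟨fun h => h ▸ le_rfl, le_antisymm hMM'⟩

section PairSelection

variable {G : Type*} [AddCommGroup G] [DecidableEq G]

theorem sumFree_insert_of_map_eq_one (φ : G →+ ZMod 3) {c : G} (hc : φ c = 2) {W : Finset G}
    (hW : ∀ w ∈ W, φ w = 1) (hWc : ∀ w ∈ W, c - w ∉ W) (hcc : c + c ∉ W) :
    SumFreeG (insert c W) := by
  have hφW : ∀ z ∈ W, φ z ≠ 0 ∧ φ z ≠ 2 := fun z hz => by rw [hW z hz]; decide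
  have hc0 : φ c ≠ 0 := by rw [hc]; decide
  intro x hx y hy hxy
  rw [mem_insert] at hx hy hxy
  rcases hx with rfl | hx <;> rcases hy with hy | hy
  · rw [hy] at hxy
    rcases hxy with h | h
    · exact hc0 (by simpa using congrArg φ h)
    · exact hcc h
  · have : φ (x + y) = 0 := by rw [map_add, hc, hW y hy]; decide
    rcases hxy with h | h
    · exact hc0 (h ▸ this)
    · exact (hφW _ h).1 this
  · have : φ (x + y) = 0 := by rw [map_add, hy, hc, hW x hx]; decide
    rcases hxy with h | h
    · exact hc0 (h ▸ this)
    · exact (hφW _ h).1 this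
  · rcases hxy with h | h
    · exact hWc x hx (by rwa [← h, add_sub_cancel_left])
    · exact (hφW _ h).2 (by rw [map_add, hW x hx, hW y hy]; decide)

def pairSelection (c : G) (R T : Finset G) : Finset G :=
  T ∪ (R \ T).image (c - ·)

variable {c : G} {R T : Finset G}

theorem mem_pairSelection {w : G} :
    w ∈ pairSelection c R T ↔ w ∈ T ∨ ∃ u ∈ R, u ∉ T ∧ c - u = w := by
  simp [pairSelection, and_assoc]

theorem map_pairSelection_eq_one (φ : G →+ ZMod 3) (hc : φ c = 2) (hR : ∀ x ∈ R, φ x = 1)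
    (hT : T ⊆ R) : ∀ w ∈ pairSelection c R T, φ w = 1 := by
  intro w hw
  rcases mem_pairSelection.mp hw with hw | ⟨u, hu, -, rfl⟩
  · exact hR w (hT hw)
  · rw [map_sub, hc, hR u hu]; decide

theorem sub_notMem_pairSelection (hRc : ∀ x ∈ R, c - x ∉ R) (hT : T ⊆ R) :
    ∀ w ∈ pairSelection c R T, c - w ∉ pairSelection c R T := by
  intro w hw hcw
  rw [mem_pairSelection] at hw hcw
  rcases hw with hw | ⟨u, hu, huT, rfl⟩ <;> rcases hcw with hcw | ⟨v, hv, hvT, hvw⟩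
  · exact hRc w (hT hw) (hT hcw)
  · exact hvT (sub_right_injective hvw ▸ hw)
  · exact huT (by rwa [sub_sub_cancel] at hcw)
  · rw [sub_sub_cancel] at hvw
    exact hRc v hv (hvw ▸ hu)

theorem add_self_notMem_pairSelection (hcc : c + c ∉ R) (hnc : -c ∉ R) (hT : T ⊆ R) :
    c + c ∉ pairSelection c R T := by
  rw [mem_pairSelection]
  rintro (h | ⟨u, hu, -, hcu⟩)
  · exact hcc (hT h)
  · obtain rfl : u = -c := by grind
    exact hnc hu

theorem filter_mem_eq_of_pairSelection_subset {M : Finset G} (hM : SumFreeG M) (hcM : c ∈ M)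
    (hsel : pairSelection c R T ⊆ M) (hT : T ⊆ R) : {x ∈ R | x ∈ M} = T := by
  ext x
  rw [mem_filter]
  refine ⟨fun ⟨hxR, hxM⟩ => ?_, fun hxT => ⟨hT hxT, hsel (mem_union_left _ hxT)⟩⟩
  by_contra hxT
  have hcx : c - x ∈ M := hsel (mem_pairSelection.mpr (.inr ⟨x, hxR, hxT, rfl⟩))
  exact hM x hxM (c - x) hcx (by rwa [add_sub_cancel])

end PairSelection

theorem two_pow_card_le_fmaxG {G : Type*} [AddCommGroup G] [Fintype G]
    (φ : G →+ ZMod 3) {c : G} (hc : φ c = 2) {R : Finset G} (hR : ∀ x ∈ R, φ x = 1)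
    (hRc : ∀ x ∈ R, c - x ∉ R) (hcc : c + c ∉ R) (hnc : -c ∉ R) :
    2 ^ #R ≤ fmaxG G := by
  classical
  have hfmax : fmaxG G = #{M : Finset G | MaxSFG M} := by
    rw [fmaxG, ← Set.ncard_coe_finset, coe_filter]; simp
  rw [hfmax, ← card_powerset]
  refine card_le_card_of_surjOn (fun M => {x ∈ R | x ∈ M}) fun T hT => ?_
  rw [mem_coe, mem_powerset] at hT
  obtain ⟨M, hsub, hM⟩ := Finite.exists_le_maximal (sumFree_insert_of_map_eq_one φ hc
    (map_pairSelection_eq_one φ hc hR hT) (sub_notMem_pairSelection hRc hT)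
    (add_self_notMem_pairSelection hcc hnc hT))
  refine ⟨M, by simpa [maxSFG_iff_maximal] using hM, ?_⟩
  exact filter_mem_eq_of_pairSelection_subset hM.prop (hsub (mem_insert_self _ _))
    ((subset_insert _ _).trans hsub) hT

theorem exists_large_pairFree_in_fiber {G : Type*} [AddCommGroup G] [Fintype G]
    (hG : (Nat.card G).Coprime 2) (φ : G →+ ZMod 3) (hφ : Surjective φ) :
    ∃ c, φ c = 2 ∧ ∃ R : Finset G, (∀ x ∈ R, φ x = 1) ∧ (∀ x ∈ R, c - x ∉ R) ∧
      c + c ∉ R ∧ -c ∉ R ∧ Fintype.card G ≤ 6 * #R + 9 := by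
  classical
  obtain ⟨c, hc⟩ := hφ 2
  set B : Finset G := {x | φ x = 1}
  have hB : Fintype.card G = 3 * #B := by rw [φ.card_eq_card_mul_card_fiber hφ 1, ZMod.card]
  set D := (B.erase (c + c)).erase (-c)
  have hmemD : ∀ x, x ∈ D ↔ x ≠ -c ∧ x ≠ c + c ∧ φ x = 1 := by simp [D, B]
  have hD : ∀ x ∈ D, c - x ∈ D := by
    intro x hx
    obtain ⟨h₁, h₂, h₃⟩ := (hmemD x).mp hx
    refine (hmemD _).mpr ⟨fun h => h₂ (by grind), fun h => h₁ (by grind), ?_⟩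
    rw [map_sub, hc, h₃]; decide
  obtain ⟨R, hRD, hRc, hcard⟩ :=
    Involutive.exists_free_half (σ := (c - ·)) (sub_sub_cancel c) D hD
  have hfix : #{x ∈ D | c - x = x} ≤ 1 := by
    rw [filter_congr fun x _ => by rw [sub_eq_iff_eq_add, eq_comm]]
    exact card_filter_add_self_eq_le_one hG D c
  have hBD : #B ≤ #D + 2 := by
    have h₁ : #B - 1 ≤ #(B.erase (c + c)) := pred_card_le_card_erase
    have h₂ : #(B.erase (c + c)) - 1 ≤ #D := pred_card_le_card_erase
    omega
  refine ⟨c, hc, R, fun x hx => ((hmemD x).mp (hRD hx)).2.2, hRc,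
    fun h => ((hmemD _).mp (hRD h)).2.1 rfl, fun h => ((hmemD _).mp (hRD h)).1 rfl, ?_⟩
  omega

/-- If `G` is a finite abelian group of order `n` with `3 ∣ n` and no prime divisor
`p ≡ 2 (mod 3)`, then `f_max(G) ≥ 2^{(n − 9)/6}`. -/
theorem fmax_group_lower_three {G : Type*} [AddCommGroup G] [Fintype G]
    (h3 : 3 ∣ Fintype.card G)
    (hp : ∀ p : ℕ, p.Prime → p ∣ Fintype.card G → p % 3 ≠ 2) :
    (2 : ℝ) ^ (((Fintype.card G : ℝ) - 9) / 6) ≤ (fmaxG G : ℝ) := by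
  rw [← Nat.card_eq_fintype_card] at h3 hp
  obtain ⟨φ, hφ⟩ := AddCommGroup.exists_surjective_zmod_of_prime_dvd_card Nat.prime_three h3
  have hodd : (Nat.card G).Coprime 2 :=
    Nat.coprime_two_right.mpr (Nat.odd_iff.mpr (by have := hp 2 Nat.prime_two; omega))
  obtain ⟨c, hc, R, hR, hRc, hcc, hnc, hcard⟩ := exists_large_pairFree_in_fiber hodd φ hφ
  have hexp : ((Fintype.card G : ℝ) - 9) / 6 ≤ #R := by
    have : (Fintype.card G : ℝ) ≤ 6 * #R + 9 := by exact_mod_cast hcard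
    linarith
  calc (2 : ℝ) ^ (((Fintype.card G : ℝ) - 9) / 6) ≤ 2 ^ (#R : ℝ) :=
        Real.rpow_le_rpow_of_exponent_le one_le_two hexp
    _ = ((2 ^ #R : ℕ) : ℝ) := by norm_cast
    _ ≤ fmaxG G := by exact_mod_cast two_pow_card_le_fmaxG φ hc hR hRc hcc hnc
end

section
/- Let G be a finite abelian group of order n whose exponent (the largest order of an element of G) is 7. Then f_max(G) ≥ 2^{n/7 − 1}. -/
set_option linter.unusedSectionVars false

section Aux

variable {P : Type*} [AddCommGroup P] [Fintype P]

/-- Every sum-free set in a finite group extends to a maximal sum-free set. -/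
lemma exists_maximal_sf (S : Finset P) (hS : SumFreeG S) :
    ∃ M : Finset P, MaxSFG M ∧ S ⊆ M := by
  classical
  set 𝒮 : Finset (Finset P) := Finset.univ.filter (fun T => S ⊆ T ∧ SumFreeG T) with h𝒮
  have hne : 𝒮.Nonempty := ⟨S, by simp [h𝒮, hS]⟩
  obtain ⟨M, hM, hmax⟩ := Finset.exists_max_image 𝒮 Finset.card hne
  rw [h𝒮, Finset.mem_filter] at hM
  refine ⟨M, ⟨hM.2.2, ?_⟩, hM.2.1⟩
  intro M' hM' hsub
  have hM'mem : M' ∈ 𝒮 := by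
    rw [h𝒮, Finset.mem_filter]
    exact ⟨Finset.mem_univ _, hM.2.1.trans hsub, hM'⟩
  exact Finset.eq_of_subset_of_card_le hsub (hmax M' hM'mem)

end Aux

section Transport

variable {P : Type*} {Q : Type*} [AddCommGroup P] [AddCommGroup Q] [Fintype P] [Fintype Q]

lemma sumFree_map (e : P ≃+ Q) {S : Finset P} (hS : SumFreeG S) :
    SumFreeG (S.map e.toEquiv.toEmbedding) := by
  intro x hx y hy hxy
  simp only [Finset.mem_map, Equiv.coe_toEmbedding, AddEquiv.coe_toEquiv] at hx hy hxy
  obtain ⟨a, ha, rfl⟩ := hx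
  obtain ⟨b, hb, rfl⟩ := hy
  obtain ⟨c, hc, hce⟩ := hxy
  have hca : c = a + b := by
    apply e.injective
    rw [map_add]
    exact hce
  exact hS a ha b hb (hca ▸ hc)

lemma maxSF_map (e : P ≃+ Q) {M : Finset P} (hM : MaxSFG M) :
    MaxSFG (M.map e.toEquiv.toEmbedding) := by
  refine ⟨sumFree_map e hM.1, ?_⟩
  intro M' hM' hsub
  have h2 : M ⊆ M'.map e.symm.toEquiv.toEmbedding := by
    intro x hx
    simp only [Finset.mem_map, Equiv.coe_toEmbedding, AddEquiv.coe_toEquiv]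
    refine ⟨e x, hsub ?_, by simp⟩
    simp only [Finset.mem_map, Equiv.coe_toEmbedding, AddEquiv.coe_toEquiv]
    exact ⟨x, hx, rfl⟩
  have h3 := hM.2 _ (sumFree_map e.symm hM') h2
  rw [h3, Finset.map_map]
  ext z
  simp

lemma ncard_max_le (e : P ≃+ Q) :
    Set.ncard {M : Finset Q | MaxSFG M} ≤ Set.ncard {M : Finset P | MaxSFG M} := by
  classical
  have hsub : (fun M : Finset Q => M.map e.symm.toEquiv.toEmbedding) '' {M | MaxSFG M}
      ⊆ {M : Finset P | MaxSFG M} := by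
    rintro _ ⟨M, hM, rfl⟩
    exact maxSF_map e.symm hM
  calc Set.ncard {M : Finset Q | MaxSFG M}
      = Set.ncard ((fun M : Finset Q => M.map e.symm.toEquiv.toEmbedding) '' {M | MaxSFG M}) := by
        refine (Set.ncard_image_of_injOn ?_).symm
        exact (Finset.map_injective _).injOn
    _ ≤ Set.ncard {M : Finset P | MaxSFG M} := Set.ncard_le_ncard hsub (Set.toFinite _)

end Transport

section Core

variable {W : Type*} [AddCommGroup W] [Fintype W] [DecidableEq W]

/-- The sum-free set attached to a choice set `A`. -/
def sfSet (A : Finset W) : Finset (ZMod 7 × W) :=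
  insert ((5 : ZMod 7), (0 : W))
    ((A.image fun h => ((2 : ZMod 7), h)) ∪
      ((Finset.univ.erase (0 : W)) \ A).image fun h => ((3 : ZMod 7), -h))

lemma mem_sfSet {A : Finset W} {z : ZMod 7 × W} (hz : z ∈ sfSet A) :
    z = ((5 : ZMod 7), (0 : W)) ∨ (∃ h ∈ A, z = ((2 : ZMod 7), h)) ∨
      (∃ h : W, h ≠ 0 ∧ h ∉ A ∧ z = ((3 : ZMod 7), -h)) := by
  simp only [sfSet, Finset.mem_insert, Finset.mem_union, Finset.mem_image, Finset.mem_sdiff,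
    Finset.mem_erase, Finset.mem_univ, and_true, true_and] at hz
  rcases hz with h | ⟨h, hh, he⟩ | ⟨h, ⟨hh0, hhA⟩, he⟩
  · exact Or.inl h
  · exact Or.inr (Or.inl ⟨h, hh, he.symm⟩)
  · exact Or.inr (Or.inr ⟨h, hh0, hhA, he.symm⟩)

lemma q_mem_sfSet (A : Finset W) : ((5 : ZMod 7), (0 : W)) ∈ sfSet A :=
  Finset.mem_insert_self _ _

lemma x_mem_sfSet {A : Finset W} {h : W} (hh : h ∈ A) : ((2 : ZMod 7), h) ∈ sfSet A :=
  Finset.mem_insert_of_mem <| Finset.mem_union_left _ <| Finset.mem_image_of_mem _ hh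

lemma y_mem_sfSet {A : Finset W} {h : W} (h0 : h ≠ 0) (hh : h ∉ A) :
    ((3 : ZMod 7), -h) ∈ sfSet A :=
  Finset.mem_insert_of_mem <| Finset.mem_union_right _ <| Finset.mem_image_of_mem _
    (Finset.mem_sdiff.2 ⟨Finset.mem_erase.2 ⟨h0, Finset.mem_univ _⟩, hh⟩)

lemma sumFree_sfSet (A : Finset W) : SumFreeG (sfSet A) := by
  intro x hx y hy hxy
  rcases mem_sfSet hx with rfl | ⟨a, ha, rfl⟩ | ⟨a, ha0, haA, rfl⟩ <;>
    rcases mem_sfSet hy with rfl | ⟨b, hb, rfl⟩ | ⟨b, hb0, hbA, rfl⟩ <;>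
      rcases mem_sfSet hxy with he | ⟨c, hc, he⟩ | ⟨c, hc0, hcA, he⟩ <;>
        simp only [Prod.mk_add_mk, Prod.mk.injEq] at he <;>
          first
          | exact absurd he.1 (by decide)
          | skip
  · -- q + q = (3, -c) : c = 0, contradiction
    exact hc0 (by have := he.2; simpa using this.symm)
  · -- (2,a) + (3,-b) = q : a = b
    have hab : a = b := by
      have := he.2
      rwa [← sub_eq_add_neg, sub_eq_zero] at this
    exact hbA (hab ▸ ha)
  · -- (3,-a) + (2,b) = q : b = a
    have hab : a = b := by
      have := he.2
      rwa [neg_add_eq_zero] at this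
    exact haA (by rw [hab]; exact hb)

lemma conflict_core {A A' : Finset W} {h : W} (h0 : h ≠ 0) (hA : h ∈ A) (hA' : h ∉ A')
    {M : Finset (ZMod 7 × W)} (h1 : sfSet A ⊆ M) (h2 : sfSet A' ⊆ M) : ¬ SumFreeG M := by
  intro hM
  have hx : ((2 : ZMod 7), h) ∈ M := h1 (x_mem_sfSet hA)
  have hy : ((3 : ZMod 7), -h) ∈ M := h2 (y_mem_sfSet h0 hA')
  have hq : ((5 : ZMod 7), (0 : W)) ∈ M := h1 (q_mem_sfSet A)
  have hsum : ((2 : ZMod 7), h) + ((3 : ZMod 7), -h) = ((5 : ZMod 7), (0 : W)) := by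
    rw [Prod.mk_add_mk, add_neg_cancel]
    norm_num
  exact hM _ hx _ hy (hsum ▸ hq)

lemma core_bound :
    2 ^ (Fintype.card W - 1) ≤ Set.ncard {M : Finset (ZMod 7 × W) | MaxSFG M} := by
  classical
  set D : Finset W := Finset.univ.erase (0 : W) with hD
  choose F hFmax hFsub using fun A : Finset W => exists_maximal_sf (sfSet A) (sumFree_sfSet A)
  have hinj : Set.InjOn F ↑D.powerset := by
    intro A hA A' hA' hEq
    by_contra hne
    have hdiff : (∃ h ∈ A, h ∉ A') ∨ (∃ h ∈ A', h ∉ A) := by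
      by_contra hcon
      push_neg at hcon
      exact hne (Finset.Subset.antisymm hcon.1 hcon.2)
    have hAD : A ⊆ D := Finset.mem_powerset.1 (Finset.mem_coe.1 hA)
    have hA'D : A' ⊆ D := Finset.mem_powerset.1 (Finset.mem_coe.1 hA')
    rcases hdiff with ⟨h, hh, hh'⟩ | ⟨h, hh, hh'⟩
    · have h0 : h ≠ 0 := (Finset.mem_erase.1 (hAD hh)).1
      exact conflict_core h0 hh hh' (hFsub A) (hEq ▸ hFsub A') (hFmax A).1
    · have h0 : h ≠ 0 := (Finset.mem_erase.1 (hA'D hh)).1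
      exact conflict_core h0 hh hh' (hFsub A') (hEq ▸ hFsub A) (hFmax A').1
  have hcard : D.powerset.card = 2 ^ (Fintype.card W - 1) := by
    rw [Finset.card_powerset, hD, Finset.card_erase_of_mem (Finset.mem_univ 0),
      Finset.card_univ]
  calc (2 : ℕ) ^ (Fintype.card W - 1) = (↑D.powerset : Set (Finset W)).ncard := by
        rw [Set.ncard_coe_finset, hcard]
    _ = (F '' ↑D.powerset).ncard := (Set.ncard_image_of_injOn hinj).symm
    _ ≤ Set.ncard {M : Finset (ZMod 7 × W) | MaxSFG M} := by
        refine Set.ncard_le_ncard ?_ (Set.toFinite _)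
        rintro _ ⟨A, _, rfl⟩
        exact hFmax A

end Core

/-- If `G` is a finite abelian group of order `n` whose exponent is `7`, then
`f_max(G) ≥ 2^{n/7 − 1}`. -/
theorem fmax_group_lower_exponent_seven {G : Type*} [AddCommGroup G] [Fintype G]
    (hexp : AddMonoid.exponent G = 7) :
    (2 : ℝ) ^ ((Fintype.card G : ℝ) / 7 - 1) ≤ (fmaxG G : ℝ) := by
  classical
  haveI : Fact (Nat.Prime 7) := ⟨by norm_num⟩
  have h7 : ∀ x : G, 7 • x = 0 := fun x => hexp ▸ AddMonoid.exponent_nsmul_eq_zero x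
  letI : Module (ZMod 7) G := AddCommGroup.zmodModule h7
  have hGnt : Nontrivial G := by
    by_contra hcon
    rw [not_nontrivial_iff_subsingleton] at hcon
    have hdvd : AddMonoid.exponent G ∣ 1 :=
      AddMonoid.exponent_dvd_of_forall_nsmul_eq_zero fun g => by
        rw [one_nsmul, Subsingleton.elim g 0]
    rw [hexp] at hdvd
    norm_num at hdvd
  obtain ⟨x0, hx0⟩ := exists_ne (0 : G)
  set K : Submodule (ZMod 7) G := (ZMod 7) ∙ x0 with hK
  obtain ⟨L, hKL⟩ := Submodule.exists_isCompl K
  letI : Fintype ↥L := Fintype.ofFinite _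
  letI : Fintype ↥K := Fintype.ofFinite _
  let eK : ZMod 7 ≃ₗ[ZMod 7] ↥K := LinearEquiv.toSpanNonzeroSingleton (ZMod 7) G x0 hx0
  let eP : (↥K × ↥L) ≃ₗ[ZMod 7] G := Submodule.prodEquivOfIsCompl K L hKL
  let e : G ≃+ (ZMod 7 × ↥L) :=
    (eP.symm.toAddEquiv).trans (AddEquiv.prodCongr eK.symm.toAddEquiv (AddEquiv.refl ↥L))
  -- cardinalities
  have hcards : Fintype.card G = 7 * Fintype.card ↥L := by
    have h1 : Fintype.card G = Fintype.card (ZMod 7 × ↥L) := Fintype.card_congr e.toEquiv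
    rw [h1, Fintype.card_prod, ZMod.card]
  have hLpos : 1 ≤ Fintype.card ↥L := Fintype.card_pos
  -- the combinatorial bound
  have hbound : 2 ^ (Fintype.card ↥L - 1) ≤ fmaxG G := by
    calc 2 ^ (Fintype.card ↥L - 1)
        ≤ Set.ncard {M : Finset (ZMod 7 × ↥L) | MaxSFG M} := core_bound
      _ ≤ Set.ncard {M : Finset G | MaxSFG M} := ncard_max_le e
      _ = fmaxG G := rfl
  -- arithmetic
  have hexp_eq : (Fintype.card G : ℝ) / 7 - 1 = ((Fintype.card ↥L - 1 : ℕ) : ℝ) := by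
    rw [hcards]
    push_cast [hLpos]
    ring
  rw [hexp_eq, Real.rpow_natCast]
  calc (2 : ℝ) ^ (Fintype.card ↥L - 1 : ℕ)
      = ((2 ^ (Fintype.card ↥L - 1 : ℕ) : ℕ) : ℝ) := by push_cast; ring
    _ ≤ (fmaxG G : ℝ) := Nat.cast_le.2 hbound
end
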